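/- arXiv:2503.11923 — 11 statements merged into one kernel-verified Lean document; each statement's English description precedes it below -/
import Mathlib

section
/- A bicolored directed path P_n (vertices x_1,...,x_n with arcs (x_i, x_{i-1}) for i=2,...,n, each arc colored 1 or 2) has a bikernel by monochromatic paths if and only if: P_n contains no two consecutive arcs of the same color, n is odd, and the arc entering the terminal vertex (the vertex of out-degree 0) has color 1. -/
/-!
A monochromatic path in `P_n` runs down the path and all its arcs have the same color. Given a
bikernel `B`, the terminal vertex has no outgoing path, so it lies in `B`, and the initial vertex
has no incoming path, so it lies in `B` too. A vertex outside `B` must reach `B` along the arc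
leaving it, which therefore has color 1, and be reached from `B` along the arc entering it, which
therefore has color 2; hence two consecutive vertices cannot both lie outside `B`, and by
independence they cannot both lie in `B`. So `B` is the set of vertices at even distance from the
terminal vertex, which forces `n` odd and the colors to alternate starting with color 1.
Conversely, for such a coloring the even vertices form a bikernel: every path of length at
least two uses two consecutive arcs, and those have different colors.
-/

/-- A bicolored digraph is given by two arc relations `A1` (color-1 arcs) and `A2`
(color-2 arcs). A monochromatic path of color `i` is a nonempty chain of `Ai`-arcs,
i.e. `Relation.TransGen Ai`. A set `B` is a bikernel by monochromatic paths if it is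
nonempty, independent by monochromatic paths, absorbent with color 1 and dominant
with color 2. -/
def IsBikernel {V : Type*} (A1 A2 : V → V → Prop) (B : Set V) : Prop :=
  B.Nonempty ∧
  (∀ u ∈ B, ∀ v ∈ B, u ≠ v →
    ¬ Relation.TransGen A1 u v ∧ ¬ Relation.TransGen A2 u v) ∧
  (∀ v, v ∉ B → ∃ b ∈ B, Relation.TransGen A1 v b) ∧
  (∀ v, v ∉ B → ∃ b ∈ B, Relation.TransGen A2 b v)

/-- The bicolored directed path on vertices `x_0, …, x_{n-1}` (as `Fin n`) with arcs
`(x_{j+1}, x_j)`, where the arc into `x_j` has color `c j` (color 1 is `0`, color 2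
is `1`): the arc relation for color `col`. -/
def pathArc (n : ℕ) (c : ℕ → Fin 2) (col : Fin 2) : Fin n → Fin n → Prop :=
  fun x y => (x : ℕ) = (y : ℕ) + 1 ∧ c (y : ℕ) = col

/-- The arcs of `P_n` alternate in color, the one entering the terminal vertex having color 1. -/
def IsAlternating (n : ℕ) (c : ℕ → Fin 2) : Prop :=
  ∀ j, j + 1 < n → (c j = 0 ↔ Even j)

section

variable {n : ℕ} {c : ℕ → Fin 2}

lemma pathArc_transGen {col : Fin 2} {x y : Fin n}
    (h : Relation.TransGen (pathArc n c col) x y) :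
    (y : ℕ) < x ∧ ∀ m, (y : ℕ) ≤ m → m < x → c m = col := by
  induction h with
  | @single z hxz =>
    obtain ⟨hval, hcol⟩ := hxz
    exact ⟨by omega, fun m hm hm' => (show m = z by omega) ▸ hcol⟩
  | tail _ hyz ih =>
    obtain ⟨hval, hcol⟩ := hyz
    refine ⟨by omega, fun m hm hm' => ?_⟩
    rcases hm.eq_or_lt with rfl | hlt
    · exact hcol
    · exact ih.2 m (by omega) hm'

lemma isAlternating_iff (hn : 1 < n) :
    IsAlternating n c ↔ (∀ j, j + 2 < n → c j ≠ c (j + 1)) ∧ c 0 = 0 := by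
  constructor
  · intro hc
    refine ⟨fun j hj hcj => ?_, (hc 0 hn).2 Even.zero⟩
    have h : Even j ↔ Even (j + 1) :=
      (hc j (by omega)).symm.trans (by rw [hcj]; exact hc (j + 1) hj)
    exact iff_not_self (h.trans Nat.even_add_one)
  · rintro ⟨hne, hc0⟩ j hj
    induction j with
    | zero => simpa using hc0
    | succ j ih =>
      have hne' : c (j + 1) = 0 ↔ ¬ c j = 0 := by
        have := hne j hj
        generalize c j = a at this ⊢
        generalize c (j + 1) = b at this ⊢
        revert a b; decide
      rw [hne', ih (by omega), Nat.even_add_one]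

namespace IsBikernel

variable {B : Set (Fin n)} (hB : IsBikernel (pathArc n c 0) (pathArc n c 1) B)
include hB

lemma color_eq_zero_of_notMem {v : Fin n} {j : ℕ} (hv : v ∉ B) (hj : (v : ℕ) = j + 1) :
    c j = 0 := by
  obtain ⟨b, -, hbv⟩ := hB.2.2.1 v hv
  obtain ⟨hlt, hcol⟩ := pathArc_transGen hbv
  exact hcol j (by omega) (by omega)

lemma color_eq_one_of_notMem {v : Fin n} (hv : v ∉ B) : c v = 1 := by
  obtain ⟨b, -, hbv⟩ := hB.2.2.2 v hv
  obtain ⟨hlt, hcol⟩ := pathArc_transGen hbv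
  exact hcol v le_rfl hlt

lemma mem_of_val_eq_zero {v : Fin n} (hv : (v : ℕ) = 0) : v ∈ B := by
  by_contra hvB
  obtain ⟨b, -, hvb⟩ := hB.2.2.1 v hvB
  have := (pathArc_transGen hvb).1
  omega

lemma mem_of_val_add_one_eq {v : Fin n} (hv : (v : ℕ) + 1 = n) : v ∈ B := by
  by_contra hvB
  obtain ⟨b, -, hbv⟩ := hB.2.2.2 v hvB
  have := (pathArc_transGen hbv).1
  omega

lemma mem_iff_notMem_of_val_eq {u v : Fin n} (huv : (v : ℕ) = u + 1) : v ∈ B ↔ u ∉ B := by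
  constructor
  · intro hv hu
    have hne : v ≠ u := fun h => by simp [h] at huv
    obtain ⟨h0, h1⟩ := hB.2.1 v hv u hu hne
    by_cases hcu : c u = 0
    · exact h0 (.single ⟨huv, hcu⟩)
    · exact h1 (.single ⟨huv, Fin.eq_one_of_ne_zero _ hcu⟩)
  · intro hu
    by_contra hv
    have h0 := hB.color_eq_zero_of_notMem hv huv
    have h1 := hB.color_eq_one_of_notMem hu
    simp [h0] at h1

lemma mem_iff_even (v : Fin n) : v ∈ B ↔ Even (v : ℕ) := by
  suffices ∀ k (v : Fin n), (v : ℕ) = k → (v ∈ B ↔ Even k) from this _ v rfl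
  intro k
  induction k with
  | zero => exact fun v hv => iff_of_true (hB.mem_of_val_eq_zero hv) Even.zero
  | succ k ih =>
    intro v hv
    rw [hB.mem_iff_notMem_of_val_eq (u := ⟨k, by omega⟩) hv, ih _ rfl, Nat.even_add_one]

lemma odd_card : Odd n := by
  obtain ⟨⟨b, hb⟩, -⟩ := hB.1
  have h := (hB.mem_iff_even ⟨n - 1, by omega⟩).1 (hB.mem_of_val_add_one_eq (by simp; omega))
  rcases h with ⟨k, hk⟩
  exact ⟨k, by simp at hk; omega⟩

lemma isAlternating : IsAlternating n c := by
  intro j hj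
  by_cases hev : Even j
  · have hsucc : (⟨j + 1, hj⟩ : Fin n) ∉ B := by
      rw [hB.mem_iff_even]; exact Nat.even_add_one.not.2 (not_not.2 hev)
    exact iff_of_true (hB.color_eq_zero_of_notMem hsucc rfl) hev
  · have hj' : (⟨j, by omega⟩ : Fin n) ∉ B := by rwa [hB.mem_iff_even]
    have := hB.color_eq_one_of_notMem hj'
    exact iff_of_false (by simp_all) hev

end IsBikernel

lemma isBikernel_setOf_even (hn : Odd n) (hc : IsAlternating n c) :
    IsBikernel (pathArc n c 0) (pathArc n c 1) {v : Fin n | Even (v : ℕ)} := by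
  refine ⟨⟨⟨0, hn.pos⟩, Even.zero⟩, ?_, ?_, ?_⟩
  · intro u hu v hv huv
    suffices ∀ col, ¬ Relation.TransGen (pathArc n c col) u v from ⟨this 0, this 1⟩
    intro col huv'
    obtain ⟨hlt, hall⟩ := pathArc_transGen huv'
    have hvu : (v : ℕ) + 2 ≤ u := by
      obtain ⟨a, ha⟩ := hu
      obtain ⟨b, hb⟩ := hv
      omega
    have hsame : c v = c (v + 1) :=
      (hall v le_rfl hlt).trans (hall (v + 1) (by omega) (by omega)).symm
    have hsucc : Even ((v : ℕ) + 1) :=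
      (hc (v + 1) (by omega)).1 (hsame ▸ (hc v (by omega)).2 hv)
    exact Nat.even_add_one.1 hsucc hv
  · intro v hv
    obtain ⟨k, hk⟩ := Nat.not_even_iff_odd.1 hv
    have := v.isLt
    refine ⟨⟨2 * k, by omega⟩, even_two_mul k, .single ⟨hk, ?_⟩⟩
    exact (hc (2 * k) (by omega)).2 (even_two_mul k)
  · intro v hv
    obtain ⟨k, hk⟩ := Nat.not_even_iff_odd.1 hv
    obtain ⟨m, hm⟩ := hn
    have hlast : (v : ℕ) + 1 < n := by omega
    have hcv : c v = 1 := Fin.eq_one_of_ne_zero _ (mt (hc v hlast).1 hv)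
    exact ⟨⟨v + 1, hlast⟩, ⟨k + 1, by simp; omega⟩, .single ⟨rfl, hcv⟩⟩

end

/-- A bicolored directed path `P_n` has a bikernel iff it has no two consecutive
arcs of the same color, `n` is odd, and the arc entering the terminal vertex
(the vertex of out-degree 0) has color 1. -/
theorem path_bikernel_iff (n : ℕ) (hn : 2 ≤ n) (c : ℕ → Fin 2) :
    (∃ B, IsBikernel (pathArc n c 0) (pathArc n c 1) B) ↔
      ((∀ j, j + 2 < n → c j ≠ c (j + 1)) ∧ Odd n ∧ c 0 = 0) := by
  constructor
  · rintro ⟨B, hB⟩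
    obtain ⟨hne, hc0⟩ := (isAlternating_iff hn).1 hB.isAlternating
    exact ⟨hne, hB.odd_card, hc0⟩
  · rintro ⟨hne, hodd, hc0⟩
    exact ⟨_, isBikernel_setOf_even hodd ((isAlternating_iff hn).2 ⟨hne, hc0⟩)⟩
end

section
/- A bicolored directed cycle D has a bikernel by monochromatic paths if and only if D contains no two consecutive arcs of the same color (no monochromatic path of two arcs); moreover in that case the bikernel is unique. -/
/-- The bicolored directed cycle on `Fin n` with arcs `(x_i, x_{(i+1) mod n})`, where
the arc leaving `x_i` has color `c i` (color 1 is `0`, color 2 is `1`): the arc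
relation for color `col`. -/
def cycArc (n : ℕ) (c : ℕ → Fin 2) (col : Fin 2) : Fin n → Fin n → Prop :=
  fun x y => (y : ℕ) = ((x : ℕ) + 1) % n ∧ c (x : ℕ) = col

private lemma fin2cases (a : Fin 2) : a = 0 ∨ a = 1 := by omega

private lemma succ_mod_inj {n a b : ℕ} (ha : a < n) (hb : b < n)
    (h : (a + 1) % n = (b + 1) % n) : a = b := by
  have ka : (a + 1) % n = a + 1 ∨ ((a + 1) % n = 0 ∧ a + 1 = n) := by
    rcases Nat.lt_or_ge (a + 1) n with h1 | h1
    · exact Or.inl (Nat.mod_eq_of_lt h1)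
    · have e : a + 1 = n := by omega
      exact Or.inr ⟨by simp [e], e⟩
  have kb : (b + 1) % n = b + 1 ∨ ((b + 1) % n = 0 ∧ b + 1 = n) := by
    rcases Nat.lt_or_ge (b + 1) n with h1 | h1
    · exact Or.inl (Nat.mod_eq_of_lt h1)
    · have e : b + 1 = n := by omega
      exact Or.inr ⟨by simp [e], e⟩
  omega

private lemma ne_succ_mod {n a : ℕ} (hn : 2 ≤ n) (ha : a < n) : (a + 1) % n ≠ a := by
  rcases Nat.lt_or_ge (a + 1) n with h1 | h1
  · rw [Nat.mod_eq_of_lt h1]; omega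
  · have e : a + 1 = n := by omega
    simp [e]; omega

private lemma exists_head {α : Type*} {r : α → α → Prop} {a b : α}
    (h : Relation.TransGen r a b) : ∃ w, r a w := by
  induction h with
  | single h => exact ⟨_, h⟩
  | tail _ _ ih => exact ih

private lemma exists_last {α : Type*} {r : α → α → Prop} {a b : α}
    (h : Relation.TransGen r a b) : ∃ w, r w b := by
  cases h with
  | single h => exact ⟨_, h⟩
  | tail _ h => exact ⟨_, h⟩

/-- Under an alternating coloring, any monochromatic path is a single arc. -/
private lemma alt_trans {n : ℕ} {c : ℕ → Fin 2} {col : Fin 2}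
    (halt : ∀ i, i < n → c i ≠ c ((i + 1) % n)) {x y : Fin n}
    (h : Relation.TransGen (cycArc n c col) x y) : cycArc n c col x y := by
  induction h with
  | single h => exact h
  | tail _ h2 ih =>
    exfalso
    obtain ⟨hxb, hcx⟩ := ih
    obtain ⟨_, hcb⟩ := h2
    exact halt x.val x.isLt (by rw [← hxb, hcx, hcb])

private lemma bikernel_of_alt {n : ℕ} (hn : 2 ≤ n) {c : ℕ → Fin 2}
    (halt : ∀ i, i < n → c i ≠ c ((i + 1) % n)) :
    IsBikernel (cycArc n c 0) (cycArc n c 1) {v : Fin n | c (v : ℕ) = 1} := by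
  have hn0 : 0 < n := by omega
  refine ⟨?_, ?_, ?_, ?_⟩
  · -- nonempty
    have h01 : c 0 ≠ c 1 := by
      have := halt 0 (by omega)
      rwa [Nat.mod_eq_of_lt (by omega : 1 < n)] at this
    rcases fin2cases (c 0) with h | h
    · exact ⟨⟨1, by omega⟩, by
        rcases fin2cases (c 1) with h' | h'
        · exact absurd (h.trans h'.symm) h01
        · simpa using h'⟩
    · exact ⟨⟨0, by omega⟩, by simpa using h⟩
  · -- independence
    intro u hu v hv huv
    simp only [Set.mem_setOf_eq] at hu hv
    constructor
    · intro h
      obtain ⟨_, hc⟩ := alt_trans halt h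
      rw [hu] at hc; exact absurd hc (by decide)
    · intro h
      obtain ⟨hv1, _⟩ := alt_trans halt h
      apply halt u.val u.isLt
      rw [← hv1, hu, hv]
  · -- absorbent (color 1, i.e. col = 0)
    intro v hv
    simp only [Set.mem_setOf_eq] at hv
    have hcv : c (v : ℕ) = 0 := by rcases fin2cases (c v) with h | h; exact h; exact absurd h hv
    refine ⟨⟨((v : ℕ) + 1) % n, Nat.mod_lt _ hn0⟩, ?_, ?_⟩
    · simp only [Set.mem_setOf_eq]
      have := halt v.val v.isLt
      rw [hcv] at this
      rcases fin2cases (c (((v : ℕ) + 1) % n)) with h | h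
      · exact absurd h.symm this
      · exact h
    · exact Relation.TransGen.single ⟨rfl, hcv⟩
  · -- dominant (color 2, i.e. col = 1)
    intro v hv
    simp only [Set.mem_setOf_eq] at hv
    have hcv : c (v : ℕ) = 0 := by rcases fin2cases (c v) with h | h; exact h; exact absurd h hv
    set b : Fin n := ⟨((v : ℕ) + (n - 1)) % n, Nat.mod_lt _ hn0⟩ with hb
    have key : (((v : ℕ) + (n - 1)) % n + 1) % n = (v : ℕ) := by
      rw [Nat.mod_add_mod]
      have e : (v : ℕ) + (n - 1) + 1 = (v : ℕ) + n := by omega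
      rw [e, Nat.add_mod_right, Nat.mod_eq_of_lt v.isLt]
    have hcb : c (b : ℕ) = 1 := by
      have := halt b.val b.isLt
      rw [show ((b : ℕ) + 1) % n = (v : ℕ) from key, hcv] at this
      rcases fin2cases (c (b : ℕ)) with h | h
      · exact absurd h this
      · exact h
    exact ⟨b, hcb, Relation.TransGen.single ⟨key.symm, hcb⟩⟩

private lemma bikernel_unique {n : ℕ} (hn : 2 ≤ n) {c : ℕ → Fin 2}
    (halt : ∀ i, i < n → c i ≠ c ((i + 1) % n)) {B : Set (Fin n)}
    (hB : IsBikernel (cycArc n c 0) (cycArc n c 1) B) :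
    B = {v : Fin n | c (v : ℕ) = 1} := by
  have hn0 : 0 < n := by omega
  obtain ⟨hne, hind, habs, hdom⟩ := hB
  have step1 : ∀ v : Fin n, c (v : ℕ) = 1 → v ∈ B := by
    intro v hcv
    by_contra hv
    obtain ⟨b, _, hpath⟩ := hdom v hv
    obtain ⟨hv1, hcb⟩ := alt_trans halt hpath
    apply halt b.val b.isLt
    rw [← hv1, hcb, hcv]
  ext v
  simp only [Set.mem_setOf_eq]
  constructor
  · intro hv
    by_contra h
    have hcv : c (v : ℕ) = 0 := by rcases fin2cases (c v) with h' | h'; exact h'; exact absurd h' h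
    set w : Fin n := ⟨((v : ℕ) + 1) % n, Nat.mod_lt _ hn0⟩ with hwdef
    have hcw : c (w : ℕ) = 1 := by
      have := halt v.val v.isLt
      rw [hcv] at this
      rcases fin2cases (c (w : ℕ)) with h' | h'
      · exact absurd h'.symm this
      · exact h'
    have hw : w ∈ B := step1 w hcw
    have hvw : v ≠ w := by
      intro e
      rw [← e] at hcw
      rw [hcv] at hcw
      exact absurd hcw (by decide)
    exact (hind v hv w hw hvw).1 (Relation.TransGen.single ⟨rfl, hcv⟩)
  · exact step1 v

private lemma alt_of_bikernel {n : ℕ} (hn : 2 ≤ n) {c : ℕ → Fin 2} {B : Set (Fin n)}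
    (hB : IsBikernel (cycArc n c 0) (cycArc n c 1) B) :
    ∀ i, i < n → c i ≠ c ((i + 1) % n) := by
  have hn0 : 0 < n := by omega
  obtain ⟨hne, hind, habs, hdom⟩ := hB
  intro i hi heq
  set y : Fin n := ⟨(i + 1) % n, Nat.mod_lt _ hn0⟩ with hydef
  have hcy : c (y : ℕ) = c i := heq.symm
  rcases fin2cases (c i) with h0 | h1
  · -- both arcs color 0; use dominance
    by_cases hy : y ∈ B
    · set z : Fin n := ⟨((y : ℕ) + 1) % n, Nat.mod_lt _ hn0⟩ with hzdef
      by_cases hz : z ∈ B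
      · have hyz : y ≠ z := by
          intro e
          exact ne_succ_mod hn y.isLt (congrArg Fin.val e).symm
        exact (hind y hy z hz hyz).1
          (Relation.TransGen.single ⟨rfl, by rw [hcy, h0]⟩)
      · obtain ⟨b, _, hpath⟩ := hdom z hz
        obtain ⟨w, hz1, hcw⟩ := exists_last hpath
        have : (w : ℕ) = (y : ℕ) :=
          succ_mod_inj w.isLt y.isLt (by rw [← hz1])
        rw [this, hcy, h0] at hcw
        exact absurd hcw (by decide)
    · obtain ⟨b, _, hpath⟩ := hdom y hy
      obtain ⟨w, hy1, hcw⟩ := exists_last hpath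
      have : (w : ℕ) = i := succ_mod_inj w.isLt hi (by rw [← hy1])
      rw [this, h0] at hcw
      exact absurd hcw (by decide)
  · -- both arcs color 1; use absorbency
    by_cases hy : y ∈ B
    · set x : Fin n := ⟨i, hi⟩ with hxdef
      by_cases hx : x ∈ B
      · have hxy : x ≠ y := by
          intro e
          exact ne_succ_mod hn hi (congrArg Fin.val e).symm
        exact (hind x hx y hy hxy).2 (Relation.TransGen.single ⟨rfl, h1⟩)
      · obtain ⟨b, _, hpath⟩ := habs x hx
        obtain ⟨w, _, hcx⟩ := exists_head hpath
        rw [show ((x : Fin n) : ℕ) = i from rfl, h1] at hcx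
        exact absurd hcx (by decide)
    · obtain ⟨b, _, hpath⟩ := habs y hy
      obtain ⟨w, _, hcy'⟩ := exists_head hpath
      rw [hcy, h1] at hcy'
      exact absurd hcy' (by decide)

/-- A bicolored directed cycle has a bikernel iff no two consecutive arcs have the
same color; moreover, in that case the bikernel is unique. -/
theorem cycle_bikernel_iff (n : ℕ) (hn : 2 ≤ n) (c : ℕ → Fin 2) :
    ((∃ B, IsBikernel (cycArc n c 0) (cycArc n c 1) B) ↔
      (∀ i, i < n → c i ≠ c ((i + 1) % n))) ∧
    ((∀ i, i < n → c i ≠ c ((i + 1) % n)) →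
      ∃! B, IsBikernel (cycArc n c 0) (cycArc n c 1) B) := by
  constructor
  · constructor
    · rintro ⟨B, hB⟩
      exact alt_of_bikernel hn hB
    · intro halt
      exact ⟨_, bikernel_of_alt hn halt⟩
  · intro halt
    exact ⟨_, bikernel_of_alt hn halt, fun B hB => bikernel_unique hn halt hB⟩
end

section
/- Let D be a bicolored digraph in which every vertex has exactly one incoming and one outgoing arc of each color. If D has a bikernel by monochromatic paths, then the color-1 arcs and the color-2 arcs each decompose into the same number k of disjoint directed cycles. -/
/-- The setoid of mutual reachability along a relation `A`; when every vertex has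
in- and out-degree one in `A`, its classes are exactly the directed cycles of `A`. -/
def mutualSetoid {V : Type*} (A : V → V → Prop) : Setoid V where
  r u v := Relation.ReflTransGen A u v ∧ Relation.ReflTransGen A v u
  iseqv := ⟨fun _ => ⟨.refl, .refl⟩, fun h => ⟨h.2, h.1⟩,
    fun h h' => ⟨h.1.trans h'.1, h'.2.trans h.2⟩⟩


lemma reach_symm {V : Type*} [Fintype V] (A : V → V → Prop)
    (ho : ∀ v, ∃! w, A v w) (hi : ∀ v, ∃! w, A w v) :
    ∀ u v, Relation.ReflTransGen A u v → Relation.ReflTransGen A v u := by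
  classical
  set f : V → V := fun v => (ho v).choose with hfdef
  have hf : ∀ v, A v (f v) := fun v => (ho v).choose_spec.1
  have hA : ∀ u v, A u v → v = f u := fun u v h => (ho u).choose_spec.2 v h
  have hinj : Function.Injective f := by
    intro a b hab
    have ha := (hi (f a)).choose_spec.2 a (hf a)
    have hb := (hi (f a)).choose_spec.2 b (hab ▸ hf b)
    exact ha.trans hb.symm
  have iter_reach : ∀ (n : ℕ) (u : V), Relation.ReflTransGen A u (f^[n] u) := by
    intro n u
    induction n with
    | zero => exact .refl
    | succ n ih =>
      rw [Function.iterate_succ_apply']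
      exact ih.tail (hf _)
  have reach_iter : ∀ u v, Relation.ReflTransGen A u v → ∃ n, f^[n] u = v := by
    intro u v h
    induction h with
    | refl => exact ⟨0, rfl⟩
    | tail h1 h2 ih =>
      obtain ⟨n, hn⟩ := ih
      exact ⟨n + 1, by rw [Function.iterate_succ_apply', hn, ← hA _ _ h2]⟩
  have hper : ∀ u : V, ∃ k > 0, f^[k] u = u := by
    intro u
    obtain ⟨a, b, hne, hab⟩ := Finite.exists_ne_map_eq_of_infinite (fun n : ℕ => f^[n] u)
    wlog hlt : a < b generalizing a b
    · exact this b a hne.symm hab.symm (by omega)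
    refine ⟨b - a, by omega, ?_⟩
    have : f^[a] (f^[b - a] u) = f^[a] u := by
      rw [← Function.iterate_add_apply]
      simpa [Nat.add_sub_cancel' hlt.le] using hab.symm
    exact (Function.Injective.iterate hinj a) this
  intro u v h
  obtain ⟨n, hn⟩ := reach_iter u v h
  obtain ⟨k, hk, hku⟩ := hper u
  have hkt : ∀ t, f^[k * t] u = u := by
    intro t
    induction t with
    | zero => simp
    | succ t ih => rw [Nat.mul_succ, Function.iterate_add_apply, hku, ih]
  have : f^[k * n - n] v = u := by
    rw [← hn, ← Function.iterate_add_apply]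
    have : k * n - n + n = k * n := by
      have : n ≤ k * n := Nat.le_mul_of_pos_left n hk
      omega
    rw [this, hkt n]
  exact this ▸ iter_reach _ v

lemma card_quot {V : Type*} [Fintype V] (A : V → V → Prop)
    (ho : ∀ v, ∃! w, A v w) (hi : ∀ v, ∃! w, A w v) (B : Set V)
    (hind : ∀ u ∈ B, ∀ v ∈ B, u ≠ v → ¬ Relation.TransGen A u v)
    (habs : ∀ v, v ∉ B → ∃ b ∈ B, Relation.ReflTransGen A v b) :
    Nat.card B = Nat.card (Quotient (mutualSetoid A)) := by
  have hsymm := reach_symm A ho hi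
  apply Nat.card_eq_of_bijective
    (fun b : B => @Quotient.mk _ (mutualSetoid A) b.val)
  constructor
  · rintro ⟨u, hu⟩ ⟨v, hv⟩ huv
    have hr : (mutualSetoid A).r u v := Quotient.exact huv
    by_contra hne
    have hne' : u ≠ v := fun h => hne (Subtype.ext h)
    rcases hr.1.cases_head with h | ⟨c, hc, hcv⟩
    · exact hne' h
    · exact hind u hu v hv hne' (Relation.TransGen.head' hc hcv)
  · intro q
    induction q using Quotient.ind with
    | _ v =>
      by_cases hv : v ∈ B
      · exact ⟨⟨v, hv⟩, rfl⟩
      · obtain ⟨b, hb, hr⟩ := habs v hv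
        exact ⟨⟨b, hb⟩, Quotient.sound ⟨hsymm _ _ hr, hr⟩⟩

/-- If a bicolored digraph in which every vertex has exactly one outgoing and one
incoming arc of each color has a bikernel, then the color-1 arcs and the color-2
arcs decompose into the same number of disjoint directed cycles. -/
theorem bikernel_same_number_of_cycles {V : Type*} [Fintype V] (A1 A2 : V → V → Prop)
    (h1o : ∀ v, ∃! w, A1 v w) (h1i : ∀ v, ∃! w, A1 w v)
    (h2o : ∀ v, ∃! w, A2 v w) (h2i : ∀ v, ∃! w, A2 w v)
    (hB : ∃ B, IsBikernel A1 A2 B) :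
    Nat.card (Quotient (mutualSetoid A1)) = Nat.card (Quotient (mutualSetoid A2)) := by
  obtain ⟨B, _, hind, habs, hdom⟩ := hB
  have e1 := card_quot A1 h1o h1i B (fun u hu v hv hne => (hind u hu v hv hne).1)
    (fun v hv => by
      obtain ⟨b, hb, ht⟩ := habs v hv
      exact ⟨b, hb, ht.to_reflTransGen⟩)
  have e2 := card_quot A2 h2o h2i B (fun u hu v hv hne => (hind u hu v hv hne).2)
    (fun v hv => by
      obtain ⟨b, hb, ht⟩ := hdom v hv
      exact ⟨b, hb, reach_symm A2 h2o h2i _ _ ht.to_reflTransGen⟩)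
  rw [← e1, e2]
end

section
/- Let G and H be bicolored digraphs each having a bikernel by monochromatic paths, with bikernels K_G and K_H. Then the Cartesian product G □ H (with the induced arc coloring) has a bikernel, namely K_G × K_H. -/
/-- The arc relation of the Cartesian product of two digraphs, restricted to one
color: `AG` and `AH` are the arcs of that color in the two factors, and product
arcs inherit the color of the underlying arc. -/
def boxArc {V W : Type*} (AG : V → V → Prop) (AH : W → W → Prop) :
    V × W → V × W → Prop :=
  fun p q => (p.1 = q.1 ∧ AH p.2 q.2) ∨ (p.2 = q.2 ∧ AG p.1 q.1)

lemma box_proj {V W : Type*} {AG : V → V → Prop} {AH : W → W → Prop} {p q : V × W}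
    (h : Relation.TransGen (boxArc AG AH) p q) :
    Relation.ReflTransGen AG p.1 q.1 ∧ Relation.ReflTransGen AH p.2 q.2 := by
  induction h with
  | single h =>
    rcases h with ⟨e, h⟩ | ⟨e, h⟩
    · exact ⟨e ▸ .refl, .single h⟩
    · exact ⟨.single h, e ▸ .refl⟩
  | tail _ h ih =>
    rcases h with ⟨e, h⟩ | ⟨e, h⟩
    · exact ⟨e ▸ ih.1, ih.2.tail h⟩
    · exact ⟨ih.1.tail h, e ▸ ih.2⟩

lemma box_lift_left {V W : Type*} {AG : V → V → Prop} {AH : W → W → Prop} {a a' : V}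
    (b : W) (h : Relation.TransGen AG a a') :
    Relation.TransGen (boxArc AG AH) (a, b) (a', b) := by
  induction h with
  | single h => exact .single (Or.inr ⟨rfl, h⟩)
  | tail _ h ih => exact ih.tail (Or.inr ⟨rfl, h⟩)

lemma box_lift_right {V W : Type*} {AG : V → V → Prop} {AH : W → W → Prop} (a : V)
    {b b' : W} (h : Relation.TransGen AH b b') :
    Relation.TransGen (boxArc AG AH) (a, b) (a, b') := by
  induction h with
  | single h => exact .single (Or.inl ⟨rfl, h⟩)
  | tail _ h ih => exact ih.tail (Or.inl ⟨rfl, h⟩)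

/-- If bicolored digraphs `G` and `H` have bikernels `K_G` and `K_H`, then the
Cartesian product `G □ H` has the bikernel `K_G × K_H`. -/
theorem box_bikernel {V W : Type*} (G1 G2 : V → V → Prop) (H1 H2 : W → W → Prop)
    (KG : Set V) (KH : Set W)
    (hG : IsBikernel G1 G2 KG) (hH : IsBikernel H1 H2 KH) :
    IsBikernel (boxArc G1 H1) (boxArc G2 H2) (KG ×ˢ KH) := by
  obtain ⟨hGne, hGind, hGabs, hGdom⟩ := hG
  obtain ⟨hHne, hHind, hHabs, hHdom⟩ := hH
  refine ⟨hGne.prod hHne, ?_, ?_, ?_⟩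
  · rintro ⟨u1, u2⟩ ⟨hu1, hu2⟩ ⟨v1, v2⟩ ⟨hv1, hv2⟩ hne
    constructor <;> intro h <;> obtain ⟨h1, h2⟩ := box_proj h
    · rcases eq_or_ne u1 v1 with e | e
      · have e2 : u2 ≠ v2 := fun e2 => hne (by simp [e, e2])
        rcases (Relation.reflTransGen_iff_eq_or_transGen.1 h2) with e' | t
        · exact e2 e'.symm
        · exact (hHind u2 hu2 v2 hv2 e2).1 t
      · rcases (Relation.reflTransGen_iff_eq_or_transGen.1 h1) with e' | t
        · exact e e'.symm
        · exact (hGind u1 hu1 v1 hv1 e).1 t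
    · rcases eq_or_ne u1 v1 with e | e
      · have e2 : u2 ≠ v2 := fun e2 => hne (by simp [e, e2])
        rcases (Relation.reflTransGen_iff_eq_or_transGen.1 h2) with e' | t
        · exact e2 e'.symm
        · exact (hHind u2 hu2 v2 hv2 e2).2 t
      · rcases (Relation.reflTransGen_iff_eq_or_transGen.1 h1) with e' | t
        · exact e e'.symm
        · exact (hGind u1 hu1 v1 hv1 e).2 t
  · rintro ⟨a, b⟩ hv
    by_cases ha : a ∈ KG
    · have hb : b ∉ KH := fun hb => hv ⟨ha, hb⟩
      obtain ⟨b', hb', hp⟩ := hHabs b hb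
      exact ⟨(a, b'), ⟨ha, hb'⟩, box_lift_right a hp⟩
    · obtain ⟨a', ha', hp⟩ := hGabs a ha
      by_cases hb : b ∈ KH
      · exact ⟨(a', b), ⟨ha', hb⟩, box_lift_left b hp⟩
      · obtain ⟨b', hb', hq⟩ := hHabs b hb
        exact ⟨(a', b'), ⟨ha', hb'⟩, (box_lift_left b hp).trans (box_lift_right a' hq)⟩
  · rintro ⟨a, b⟩ hv
    by_cases ha : a ∈ KG
    · have hb : b ∉ KH := fun hb => hv ⟨ha, hb⟩
      obtain ⟨b', hb', hp⟩ := hHdom b hb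
      exact ⟨(a, b'), ⟨ha, hb'⟩, box_lift_right a hp⟩
    · obtain ⟨a', ha', hp⟩ := hGdom a ha
      by_cases hb : b ∈ KH
      · exact ⟨(a', b), ⟨ha', hb⟩, box_lift_left b hp⟩
      · obtain ⟨b', hb', hq⟩ := hHdom b hb
        exact ⟨(a', b'), ⟨ha', hb'⟩, (box_lift_right a' hq).trans (box_lift_left b hp)⟩
end

section
/- Let G = γ_1 □ ... □ γ_n be a Cartesian product of bicolored directed paths. Then G has a bikernel by monochromatic paths if and only if every factor γ_i has a bikernel. -/
/-- The arc relation (of a fixed color) of the Cartesian product of an indexed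
family of digraphs: exactly one coordinate moves along an arc of its factor. -/
def piBoxArc {ι : Type*} {V : ι → Type*} (A : ∀ i, V i → V i → Prop) :
    (∀ i, V i) → (∀ i, V i) → Prop :=
  fun x y => ∃ i, A i (x i) (y i) ∧ ∀ j, j ≠ i → x j = y j

open Relation

/-- forward direction of path transgen characterization -/
theorem tg_path_mp {n : ℕ} {c : ℕ → Fin 2} {col : Fin 2} {u v : Fin n}
    (h : TransGen (pathArc n c col) u v) :
    (v : ℕ) < u ∧ ∀ j, (v : ℕ) ≤ j → j < (u : ℕ) → c j = col := by
  induction h with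
  | @single w h => obtain ⟨h1, h2⟩ := h
                   refine ⟨by omega, fun j hj1 hj2 => ?_⟩
                   have : j = (w : ℕ) := by omega
                   rwa [this]
  | @tail w w' _ h2 ih =>
      obtain ⟨hw, hseg⟩ := ih
      obtain ⟨h1, h2⟩ := h2
      refine ⟨by omega, fun j hj1 hj2 => ?_⟩
      rcases eq_or_lt_of_le hj1 with he | hl
      · rwa [← he]
      · exact hseg j (by omega) hj2

theorem tg_path_mpr {n : ℕ} {c : ℕ → Fin 2} {col : Fin 2} :
    ∀ (d : ℕ) (u v : Fin n), (u : ℕ) = (v : ℕ) + d + 1 →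
    (∀ j, (v : ℕ) ≤ j → j < (u : ℕ) → c j = col) →
    TransGen (pathArc n c col) u v := by
  intro d
  induction d with
  | zero => intro u v h hseg
            exact TransGen.single ⟨h, hseg v le_rfl (by omega)⟩
  | succ d ih =>
      intro u v h hseg
      have hwlt : (v : ℕ) + d + 1 < n := by have := u.isLt; omega
      set w : Fin n := ⟨(v : ℕ) + d + 1, hwlt⟩ with hw
      have harc : pathArc n c col u w := ⟨by simp [hw]; omega, hseg _ (by simp [hw]; omega) (by simp [hw]; omega)⟩
      exact TransGen.head harc (ih w v (by simp [hw]) (fun j hj1 hj2 => hseg j hj1 (by simp [hw] at hj2; omega)))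

theorem tg_path_iff {n : ℕ} {c : ℕ → Fin 2} {col : Fin 2} {u v : Fin n} :
    TransGen (pathArc n c col) u v ↔
      ((v : ℕ) < u ∧ ∀ j, (v : ℕ) ≤ j → j < (u : ℕ) → c j = col) := by
  constructor
  · exact tg_path_mp
  · rintro ⟨h1, h2⟩
    exact tg_path_mpr ((u : ℕ) - (v : ℕ) - 1) u v (by omega) h2

/-- projection of a product transgen to each coordinate -/
theorem tg_pi_proj {ι : Type*} {V : ι → Type*} {A : ∀ i, V i → V i → Prop}
    {x y : ∀ i, V i} (h : TransGen (piBoxArc A) x y) :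
    ∀ i, x i = y i ∨ TransGen (A i) (x i) (y i) := by
  induction h with
  | single h =>
      obtain ⟨i0, hA, heq⟩ := h
      intro i
      by_cases hi : i = i0
      · subst hi; exact Or.inr (TransGen.single hA)
      · exact Or.inl (heq i hi)
  | tail _ harc ih =>
      obtain ⟨i0, hA, heq⟩ := harc
      intro i
      by_cases hi : i = i0
      · subst hi
        rcases ih i with he | ht
        · exact Or.inr (he ▸ TransGen.single hA)
        · exact Or.inr (ht.tail hA)
      · rcases ih i with he | ht
        · exact Or.inl (he.trans (heq i hi))
        · exact Or.inr ((heq i hi) ▸ ht)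

theorem rtg_pi_lift {ι : Type*} [DecidableEq ι] {V : ι → Type*} {A : ∀ i, V i → V i → Prop}
    (i : ι) (x : ∀ i, V i) {u w : V i} (h : ReflTransGen (A i) u w) :
    ReflTransGen (piBoxArc A) (Function.update x i u) (Function.update x i w) := by
  induction h with
  | refl => exact ReflTransGen.refl
  | tail _ harc ih =>
      refine ih.tail ⟨i, ?_, fun j hj => ?_⟩
      · simpa using harc
      · simp [Function.update_of_ne hj]

theorem rtg_pi_list {ι : Type*} [DecidableEq ι] {V : ι → Type*} {A : ∀ i, V i → V i → Prop} :
    ∀ (l : List ι) (x y : ∀ i, V i), (∀ i, i ∉ l → x i = y i) →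
    (∀ i, ReflTransGen (A i) (x i) (y i)) → ReflTransGen (piBoxArc A) x y := by
  intro l
  induction l with
  | nil => intro x y h0 _
           have : x = y := funext fun i => h0 i (by simp)
           exact this ▸ ReflTransGen.refl
  | cons i t ih =>
      intro x y h0 h1
      have step : ReflTransGen (piBoxArc A) x (Function.update x i (y i)) := by
        have := rtg_pi_lift (A := A) i x (h1 i)
        rwa [Function.update_eq_self] at this
      refine step.trans (ih (Function.update x i (y i)) y (fun j hj => ?_) (fun j => ?_))
      · by_cases hji : j = i
        · subst hji; simp
        · rw [Function.update_of_ne hji]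
          exact h0 j (by simp [hji, hj])
      · by_cases hji : j = i
        · subst hji; simp only [Function.update_self]; exact ReflTransGen.refl
        · rw [Function.update_of_ne hji]; exact h1 j

theorem tg_pi_of {ι : Type*} [DecidableEq ι] [Fintype ι] {V : ι → Type*}
    {A : ∀ i, V i → V i → Prop} {x y : ∀ i, V i}
    (h : ∀ i, x i = y i ∨ TransGen (A i) (x i) (y i)) (hne : x ≠ y) :
    TransGen (piBoxArc A) x y := by
  have hr : ReflTransGen (piBoxArc A) x y := by
    refine rtg_pi_list (Finset.univ.toList) x y (fun i hi => absurd ?_ hi) (fun i => ?_)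
    · simp
    · rcases h i with he | ht
      · exact he ▸ ReflTransGen.refl
      · exact ht.to_reflTransGen
  rcases reflTransGen_iff_eq_or_transGen.mp hr with he | ht
  · exact absurd he.symm hne
  · exact ht

def goodPath (n : ℕ) (c : ℕ → Fin 2) : Prop :=
  n % 2 = 1 ∧ ∀ j, j + 1 < n → c j = if j % 2 = 0 then 0 else 1

theorem fin2_cases (x : Fin 2) : x = 0 ∨ x = 1 := by omega

theorem oneD_backward {n : ℕ} {c : ℕ → Fin 2} (hn : 2 ≤ n) (hg : goodPath n c) :
    IsBikernel (pathArc n c 0) (pathArc n c 1) {u : Fin n | (u : ℕ) % 2 = 0} := by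
  obtain ⟨hodd, hcol⟩ := hg
  refine ⟨⟨⟨0, by omega⟩, by simp⟩, ?_, ?_, ?_⟩
  · intro u hu v hv huv
    simp only [Set.mem_setOf_eq] at hu hv
    have huv' : (u : ℕ) ≠ (v : ℕ) := fun h => huv (Fin.ext h)
    constructor
    · intro h
      obtain ⟨hlt, hseg⟩ := tg_path_mp h
      have h1 : c ((v : ℕ) + 1) = 0 := hseg _ (by omega) (by omega)
      have h2 : c ((v : ℕ) + 1) = 1 := by
        rw [hcol _ (by have := u.isLt; omega)]
        have : ((v : ℕ) + 1) % 2 = 1 := by omega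
        simp [this]
      rw [h1] at h2; exact absurd h2 (by decide)
    · intro h
      obtain ⟨hlt, hseg⟩ := tg_path_mp h
      have h1 : c (v : ℕ) = 1 := hseg _ le_rfl (by omega)
      have h2 : c (v : ℕ) = 0 := by
        rw [hcol _ (by have := u.isLt; omega)]
        simp [hv]
      rw [h1] at h2; exact absurd h2 (by decide)
  · intro v hv
    simp only [Set.mem_setOf_eq] at hv
    have hv1 : (v : ℕ) % 2 = 1 := by omega
    refine ⟨⟨(v : ℕ) - 1, by have := v.isLt; omega⟩, by simp [Set.mem_setOf_eq]; omega, ?_⟩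
    refine Relation.TransGen.single ⟨by simp; omega, ?_⟩
    simp only
    rw [hcol _ (by have := v.isLt; omega)]
    have : ((v : ℕ) - 1) % 2 = 0 := by omega
    simp [this]
  · intro v hv
    simp only [Set.mem_setOf_eq] at hv
    have hv1 : (v : ℕ) % 2 = 1 := by omega
    have hvn : (v : ℕ) + 1 < n := by have := v.isLt; omega
    refine ⟨⟨(v : ℕ) + 1, hvn⟩, by simp [Set.mem_setOf_eq]; omega, ?_⟩
    refine Relation.TransGen.single ⟨by simp, ?_⟩
    rw [hcol _ hvn]
    simp [hv1]

theorem oneD_forward {n : ℕ} {c : ℕ → Fin 2} (hn : 2 ≤ n)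
    (h : ∃ B, IsBikernel (pathArc n c 0) (pathArc n c 1) B) : goodPath n c := by
  obtain ⟨B, hne, hind, habs, hdom⟩ := h
  -- bottom vertex is in B
  have hzero : (⟨0, by omega⟩ : Fin n) ∈ B := by
    by_contra h0
    obtain ⟨b, hb, ht⟩ := habs _ h0
    have := (tg_path_mp ht).1
    simp at this
  -- successors of B-elements are not in B
  have S0 : ∀ u : Fin n, u ∈ B → ∀ hlt : (u : ℕ) + 1 < n, (⟨(u : ℕ) + 1, hlt⟩ : Fin n) ∉ B := by
    intro u hu hlt hvB
    have hne' : (⟨(u : ℕ) + 1, hlt⟩ : Fin n) ≠ u := by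
      intro h; have := congrArg Fin.val h; simp at this
    have hi := hind _ hvB u hu hne'
    rcases fin2_cases (c (u : ℕ)) with h0 | h1
    · exact hi.1 (Relation.TransGen.single ⟨by simp, h0⟩)
    · exact hi.2 (Relation.TransGen.single ⟨by simp, h1⟩)
  have S1 : ∀ u : Fin n, u ∈ B → (u : ℕ) + 1 < n → c (u : ℕ) = 0 := by
    intro u hu hlt
    obtain ⟨b, hb, ht⟩ := habs _ (S0 u hu hlt)
    obtain ⟨hlt2, hseg⟩ := tg_path_mp ht
    simp only [Fin.val_mk] at hlt2 hseg
    rcases eq_or_lt_of_le (by omega : (b : ℕ) ≤ (u : ℕ)) with he | hl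
    · exact hseg (u : ℕ) (by omega) (by omega)
    · exfalso
      have hub : u ≠ b := fun h => by rw [h] at hl; omega
      have : Relation.TransGen (pathArc n c 0) u b :=
        tg_path_iff.mpr ⟨hl, fun j hj1 hj2 => hseg j hj1 (by omega)⟩
      exact (hind u hu b hb hub).1 this
  have S2 : ∀ u : Fin n, u ∈ B → (u : ℕ) + 1 < n →
      c ((u : ℕ) + 1) = 1 ∧ ∃ w : Fin n, w ∈ B ∧ (w : ℕ) = (u : ℕ) + 2 := by
    intro u hu hlt
    obtain ⟨b, hb, ht⟩ := hdom _ (S0 u hu hlt)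
    obtain ⟨hlt2, hseg⟩ := tg_path_mp ht
    simp only [Fin.val_mk] at hlt2 hseg
    have hc1 : c ((u : ℕ) + 1) = 1 := hseg _ le_rfl (by omega)
    refine ⟨hc1, b, hb, ?_⟩
    by_contra hbe
    have hb2 : (u : ℕ) + 2 < (b : ℕ) := by omega
    have hwlt : (u : ℕ) + 2 < n := by have := b.isLt; omega
    by_cases hwB : (⟨(u : ℕ) + 2, hwlt⟩ : Fin n) ∈ B
    · have hbw : b ≠ (⟨(u : ℕ) + 2, hwlt⟩ : Fin n) := by
        intro h; have := congrArg Fin.val h; simp at this; omega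
      have : Relation.TransGen (pathArc n c 1) b (⟨(u : ℕ) + 2, hwlt⟩ : Fin n) :=
        tg_path_iff.mpr ⟨by simp; omega, fun j hj1 hj2 => hseg j (by simp at hj1; omega) hj2⟩
      exact (hind b hb _ hwB hbw).2 this
    · obtain ⟨d, hd, htd⟩ := habs _ hwB
      obtain ⟨hlt3, hseg3⟩ := tg_path_mp htd
      simp only [Fin.val_mk] at hlt3 hseg3
      have : c ((u : ℕ) + 1) = 0 := hseg3 _ (by omega) (by omega)
      rw [hc1] at this; exact absurd this (by decide)
  -- the chain of even vertices
  have chain : ∀ t : ℕ, 2 * t < n → ∃ w : Fin n, w ∈ B ∧ (w : ℕ) = 2 * t := by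
    intro t
    induction t with
    | zero => exact fun _ => ⟨⟨0, by omega⟩, hzero, by simp⟩
    | succ t ih =>
        intro hlt
        obtain ⟨w, hw, hwv⟩ := ih (by omega)
        obtain ⟨_, w', hw', hwv'⟩ := S2 w hw (by omega)
        exact ⟨w', hw', by omega⟩
  constructor
  · by_contra hpar
    have h1 : 2 * ((n - 2) / 2) = n - 2 := by omega
    obtain ⟨w, hw, hwv⟩ := chain ((n - 2) / 2) (by omega)
    obtain ⟨_, w', hw', hwv'⟩ := S2 w hw (by omega)
    have := w'.isLt; omega
  · intro j hj
    rcases Nat.even_or_odd j with he | ho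
    · obtain ⟨t, ht⟩ := he
      obtain ⟨w, hw, hwv⟩ := chain t (by omega)
      have hcj : c j = 0 := by
        have := S1 w hw (by omega)
        rwa [hwv, show 2 * t = j by omega] at this
      rw [hcj]; simp [show j % 2 = 0 by omega]
    · obtain ⟨t, ht⟩ := ho
      obtain ⟨w, hw, hwv⟩ := chain t (by omega)
      have hcj : c j = 1 := by
        have := (S2 w hw (by omega)).1
        rwa [hwv, show 2 * t + 1 = j by omega] at this
      rw [hcj]; simp [show ¬ (j % 2 = 0) by omega]

theorem prod_backward {k : ℕ} {m : Fin k → ℕ} {c : Fin k → ℕ → Fin 2}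
    (hm : ∀ i, 2 ≤ m i) (hg : ∀ i, goodPath (m i) (c i)) :
    IsBikernel (piBoxArc fun i => pathArc (m i) (c i) 0)
      (piBoxArc fun i => pathArc (m i) (c i) 1)
      {x : ∀ i, Fin (m i) | ∀ i, (x i : ℕ) % 2 = 0} := by
  have hodd : ∀ i, m i % 2 = 1 := fun i => (hg i).1
  have hcol : ∀ i j, j + 1 < m i → c i j = if j % 2 = 0 then 0 else 1 := fun i => (hg i).2
  refine ⟨⟨fun i => ⟨0, by have := hm i; omega⟩, fun i => by simp⟩, ?_, ?_, ?_⟩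
  · intro x hx y hy hxy
    simp only [Set.mem_setOf_eq] at hx hy
    have key : ∀ col : Fin 2, ¬ Relation.TransGen (piBoxArc fun i => pathArc (m i) (c i) col) x y := by
      intro col h
      obtain ⟨i, hi⟩ := Function.ne_iff.mp hxy
      rcases tg_pi_proj h i with he | ht
      · exact hi he
      · obtain ⟨hlt, hseg⟩ := tg_path_mp ht
        have hd : (y i : ℕ) + 2 ≤ (x i : ℕ) := by have := hx i; have := hy i; omega
        have h0 : c i (y i : ℕ) = 0 := by
          rw [hcol i _ (by have := (x i).isLt; omega)]
          simp [show ((y i : ℕ)) % 2 = 0 from hy i]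
        have h1 : c i ((y i : ℕ) + 1) = 1 := by
          rw [hcol i _ (by have := (x i).isLt; omega)]
          simp [show ¬ (((y i : ℕ) + 1) % 2 = 0) by have := hy i; omega]
        have e0 : c i (y i : ℕ) = col := hseg _ le_rfl (by omega)
        have e1 : c i ((y i : ℕ) + 1) = col := hseg _ (by omega) (by omega)
        rw [h0] at e0; rw [h1] at e1; rw [← e0] at e1
        exact absurd e1 (by decide)
    exact ⟨key 0, key 1⟩
  · intro v hv
    simp only [Set.mem_setOf_eq] at hv
    push_neg at hv
    obtain ⟨i0, hi0⟩ := hv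
    set b : ∀ i, Fin (m i) := fun i =>
      if h : (v i : ℕ) % 2 = 0 then v i else ⟨(v i : ℕ) - 1, by have := (v i).isLt; omega⟩ with hbdef
    have hbB : ∀ i, (b i : ℕ) % 2 = 0 := by
      intro i
      by_cases h : (v i : ℕ) % 2 = 0 <;> simp [hbdef, h] <;> omega
    refine ⟨b, hbB, ?_⟩
    refine tg_pi_of (fun i => ?_) ?_
    · by_cases h : (v i : ℕ) % 2 = 0
      · exact Or.inl (by simp [hbdef, h])
      · refine Or.inr (tg_path_iff.mpr ⟨by simp only [hbdef, h, dite_false, Fin.val_mk]; omega, fun j hj1 hj2 => ?_⟩)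
        simp only [hbdef, h, dite_false, Fin.val_mk] at hj1 hj2
        have hj : j = (v i : ℕ) - 1 := by omega
        subst hj
        rw [hcol i _ (by have := (v i).isLt; omega)]
        simp [show ((v i : ℕ) - 1) % 2 = 0 by omega]
    · intro h
      have := congrFun h i0
      rw [this] at hi0
      exact hi0 (hbB i0)
  · intro v hv
    simp only [Set.mem_setOf_eq] at hv
    push_neg at hv
    obtain ⟨i0, hi0⟩ := hv
    set b : ∀ i, Fin (m i) := fun i =>
      if h : (v i : ℕ) % 2 = 0 then v i
      else ⟨(v i : ℕ) + 1, by have := (v i).isLt; have := hodd i; omega⟩ with hbdef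
    have hbB : ∀ i, (b i : ℕ) % 2 = 0 := by
      intro i
      by_cases h : (v i : ℕ) % 2 = 0 <;> simp [hbdef, h] <;> omega
    refine ⟨b, hbB, ?_⟩
    refine tg_pi_of (fun i => ?_) ?_
    · by_cases h : (v i : ℕ) % 2 = 0
      · exact Or.inl (by simp [hbdef, h])
      · refine Or.inr (tg_path_iff.mpr ⟨by simp only [hbdef, h, dite_false, Fin.val_mk]; omega, fun j hj1 hj2 => ?_⟩)
        simp only [hbdef, h, dite_false, Fin.val_mk] at hj1 hj2
        have hj : j = (v i : ℕ) := by omega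
        subst hj
        rw [hcol i _ (by have := (v i).isLt; have := hodd i; omega)]
        simp [h]
    · intro h
      have h2 := congrFun h i0
      have : (b i0 : ℕ) % 2 = 0 := hbB i0
      rw [h2] at this
      exact hi0 this

theorem prod_forward {k : ℕ} {m : Fin k → ℕ} {c : Fin k → ℕ → Fin 2}
    (hm : ∀ i, 2 ≤ m i)
    (h : ∃ B, IsBikernel (piBoxArc fun i => pathArc (m i) (c i) 0)
      (piBoxArc fun i => pathArc (m i) (c i) 1) B) :
    ∀ i, goodPath (m i) (c i) := by
  obtain ⟨B, hne, hind, habs, hdom⟩ := h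
  have hfeq : ∀ a b : ∀ i, Fin (m i), (∀ i, (a i : ℕ) = (b i : ℕ)) → a = b :=
    fun a b hab => funext fun i => Fin.ext (hab i)
  set z : ∀ i, Fin (m i) := fun i => ⟨0, by have := hm i; omega⟩ with hz
  have hzval : ∀ j, (z j : ℕ) = 0 := fun j => rfl
  -- the all-zero vertex is in B
  have hzB : z ∈ B := by
    by_contra h0
    obtain ⟨b, hb, ht⟩ := habs _ h0
    have hbz : b = z := by
      refine hfeq _ _ fun i => ?_
      rcases tg_pi_proj ht i with he | hti
      · rw [← he]
      · exfalso; have := (tg_path_mp hti).1; rw [hzval] at this; omega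
    exact h0 (hbz ▸ hb)
  -- basic update value facts
  have hupd_ne : ∀ (i : Fin k) (u : Fin (m i)) (j : Fin k), j ≠ i →
      ((Function.update z i u) j : ℕ) = 0 := by
    intro i u j hj; rw [Function.update_of_ne hj]
  -- successor of a chain vertex is not in B
  have S0 : ∀ (i : Fin k) (t : ℕ) (ht : t + 1 < m i),
      Function.update z i ⟨t, by omega⟩ ∈ B → Function.update z i ⟨t + 1, ht⟩ ∉ B := by
    intro i t ht hx hv
    have hvx : Function.update z i ⟨t + 1, ht⟩ ≠ Function.update z i ⟨t, by omega⟩ := by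
      intro hh
      have := congrFun hh i
      simp only [Function.update_self, Fin.mk.injEq] at this
      omega
    have hi := hind _ hv _ hx hvx
    rcases fin2_cases (c i t) with h0 | h1
    · refine hi.1 (Relation.TransGen.single ⟨i, ⟨by simp, by simpa using h0⟩, fun j hj => ?_⟩)
      rw [Function.update_of_ne hj, Function.update_of_ne hj]
    · refine hi.2 (Relation.TransGen.single ⟨i, ⟨by simp, by simpa using h1⟩, fun j hj => ?_⟩)
      rw [Function.update_of_ne hj, Function.update_of_ne hj]
  -- S1 : the colour at a chain vertex is 0
  have S1 : ∀ (i : Fin k) (t : ℕ) (ht : t + 1 < m i),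
      Function.update z i ⟨t, by omega⟩ ∈ B → c i t = 0 := by
    intro i t ht hx
    obtain ⟨b, hb, htg⟩ := habs _ (S0 i t ht hx)
    have hproj := tg_pi_proj htg
    have hbj : ∀ j, j ≠ i → (b j : ℕ) = 0 := by
      intro j hj
      rcases hproj j with he | hti
      · rw [← he, hupd_ne i _ j hj]
      · exfalso; have := (tg_path_mp hti).1; rw [hupd_ne i _ j hj] at this; omega
    rcases hproj i with he | hti
    · exfalso
      have hbv : b = Function.update z i ⟨t + 1, ht⟩ := by
        refine hfeq _ _ fun j => ?_
        by_cases hj : j = i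
        · subst hj; rw [← he]
        · rw [hbj j hj, hupd_ne i _ j hj]
      exact (S0 i t ht hx) (hbv ▸ hb)
    · obtain ⟨hlt, hseg⟩ := tg_path_mp hti
      simp only [Function.update_self, Fin.val_mk] at hlt hseg
      rcases eq_or_lt_of_le (show (b i : ℕ) ≤ t by omega) with he2 | hl2
      · exact hseg t (by omega) (by omega)
      · exfalso
        have hxb : Function.update z i ⟨t, by omega⟩ ≠ b := by
          intro hh
          have := congrFun hh i
          simp only [Function.update_self] at this
          rw [← this] at hl2
          simp only [Fin.val_mk] at hl2
          omega
        have htx : Relation.TransGen (piBoxArc fun i => pathArc (m i) (c i) 0)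
            (Function.update z i ⟨t, by omega⟩) b := by
          refine tg_pi_of (fun j => ?_) hxb
          by_cases hj : j = i
          · subst hj
            refine Or.inr (tg_path_iff.mpr ⟨by simpa using hl2, fun j' hj1 hj2 => ?_⟩)
            simp only [Function.update_self, Fin.val_mk] at hj1 hj2
            exact hseg j' hj1 (by omega)
          · exact Or.inl (Fin.ext (by rw [hbj j hj, hupd_ne i _ j hj]))
        exact (hind _ hx b hb hxb).1 htx
  have czero : ∀ j, c j 0 = 0 := by
    intro j
    refine S1 j 0 (by have := hm j; omega) ?_
    rw [show (⟨0, by have := hm j; omega⟩ : Fin (m j)) = z j from rfl, Function.update_eq_self]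
    exact hzB
  -- S2 : the next colour is 1 and the +2 vertex is in B
  have S2 : ∀ (i : Fin k) (t : ℕ) (ht : t + 1 < m i),
      Function.update z i ⟨t, by omega⟩ ∈ B →
      c i (t + 1) = 1 ∧ ∃ h2 : t + 2 < m i, Function.update z i ⟨t + 2, h2⟩ ∈ B := by
    intro i t ht hx
    obtain ⟨b, hb, htg⟩ := hdom _ (S0 i t ht hx)
    have hproj := tg_pi_proj htg
    have hbj : ∀ j, j ≠ i → (b j : ℕ) = 0 := by
      intro j hj
      rcases hproj j with he | hti
      · rw [he, hupd_ne i _ j hj]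
      · exfalso
        obtain ⟨hlt, hseg⟩ := tg_path_mp hti
        rw [hupd_ne i _ j hj] at hlt hseg
        have : c j 0 = 1 := hseg 0 le_rfl (by omega)
        rw [czero j] at this
        exact absurd this (by decide)
    rcases hproj i with he | hti
    · exfalso
      have hbv : b = Function.update z i ⟨t + 1, ht⟩ := by
        refine hfeq _ _ fun j => ?_
        by_cases hj : j = i
        · subst hj; rw [he]
        · rw [hbj j hj, hupd_ne i _ j hj]
      exact (S0 i t ht hx) (hbv ▸ hb)
    · obtain ⟨hlt, hseg⟩ := tg_path_mp hti
      simp only [Function.update_self, Fin.val_mk] at hlt hseg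
      have hc1 : c i (t + 1) = 1 := hseg (t + 1) le_rfl (by omega)
      have h2 : t + 2 < m i := by have := (b i).isLt; omega
      have hbi : (b i : ℕ) = t + 2 := by
        by_contra hbe
        have hb2 : t + 2 < (b i : ℕ) := by omega
        by_cases hwB : Function.update z i ⟨t + 2, h2⟩ ∈ B
        · have hbw : b ≠ Function.update z i ⟨t + 2, h2⟩ := by
            intro hh
            have := congrFun hh i
            simp only [Function.update_self] at this
            rw [this] at hb2
            simp only [Fin.val_mk] at hb2
            omega
          have htbw : Relation.TransGen (piBoxArc fun i => pathArc (m i) (c i) 1)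
              b (Function.update z i ⟨t + 2, h2⟩) := by
            refine tg_pi_of (fun j => ?_) hbw
            by_cases hj : j = i
            · subst hj
              refine Or.inr (tg_path_iff.mpr ⟨by simpa using hb2, fun j' hj1 hj2 => ?_⟩)
              simp only [Function.update_self, Fin.val_mk] at hj1
              exact hseg j' (by omega) hj2
            · exact Or.inl (Fin.ext (by rw [hbj j hj, hupd_ne i _ j hj]))
          exact (hind b hb _ hwB hbw).2 htbw
        · obtain ⟨d, hd, htd⟩ := habs _ hwB
          have hprojd := tg_pi_proj htd
          have hdj : ∀ j, j ≠ i → (d j : ℕ) = 0 := by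
            intro j hj
            rcases hprojd j with he' | hti'
            · rw [← he', hupd_ne i _ j hj]
            · exfalso; have := (tg_path_mp hti').1; rw [hupd_ne i _ j hj] at this; omega
          rcases hprojd i with he' | hti'
          · have hdv : d = Function.update z i ⟨t + 2, h2⟩ := by
              refine hfeq _ _ fun j => ?_
              by_cases hj : j = i
              · subst hj; rw [← he']
              · rw [hdj j hj, hupd_ne i _ j hj]
            exact hwB (hdv ▸ hd)
          · obtain ⟨hlt', hseg'⟩ := tg_path_mp hti'
            simp only [Function.update_self, Fin.val_mk] at hlt' hseg'
            have : c i (t + 1) = 0 := hseg' (t + 1) (by omega) (by omega)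
            rw [hc1] at this
            exact absurd this (by decide)
      refine ⟨hc1, h2, ?_⟩
      have : b = Function.update z i ⟨t + 2, h2⟩ := by
        refine hfeq _ _ fun j => ?_
        by_cases hj : j = i
        · subst hj; simp only [Function.update_self]; rw [hbi]
        · rw [hbj j hj, hupd_ne i _ j hj]
      exact this ▸ hb
  -- assembly
  intro i
  have chain : ∀ t : ℕ, 2 * t < m i →
      ∃ hty : 2 * t < m i, Function.update z i ⟨2 * t, hty⟩ ∈ B := by
    intro t
    induction t with
    | zero =>
        intro hlt
        refine ⟨hlt, ?_⟩
        rw [show (⟨2 * 0, hlt⟩ : Fin (m i)) = z i from Fin.ext (by simp [hzval]),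
          Function.update_eq_self]
        exact hzB
    | succ t ih =>
        intro hlt
        obtain ⟨hty, hw⟩ := ih (by omega)
        obtain ⟨_, h2, hw'⟩ := S2 i (2 * t) (by omega) hw
        refine ⟨hlt, ?_⟩
        rw [show (⟨2 * (t + 1), hlt⟩ : Fin (m i)) = ⟨2 * t + 2, h2⟩ from Fin.ext (by simp only [Fin.val_mk]; omega)]
        exact hw'
  constructor
  · by_contra hpar
    have hmi := hm i
    obtain ⟨hty, hw⟩ := chain ((m i - 2) / 2) (by omega)
    have hw2 : Function.update z i ⟨m i - 2, by omega⟩ ∈ B := by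
      rw [show (⟨m i - 2, by omega⟩ : Fin (m i)) = ⟨2 * ((m i - 2) / 2), hty⟩ from
        Fin.ext (by simp only [Fin.val_mk]; omega)]
      exact hw
    obtain ⟨_, h2, _⟩ := S2 i (m i - 2) (by omega) hw2
    omega
  · intro j hj
    rcases Nat.even_or_odd j with he | ho
    · obtain ⟨t, htj⟩ := he
      obtain ⟨hty, hw⟩ := chain t (by omega)
      have hw2 : Function.update z i ⟨j, by omega⟩ ∈ B := by
        rw [show (⟨j, by omega⟩ : Fin (m i)) = ⟨2 * t, hty⟩ from Fin.ext (by simp only [Fin.val_mk]; omega)]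
        exact hw
      have := S1 i j hj hw2
      rw [this]; simp [show j % 2 = 0 by omega]
    · obtain ⟨t, htj⟩ := ho
      obtain ⟨hty, hw⟩ := chain t (by omega)
      have hw2 : Function.update z i ⟨j - 1, by omega⟩ ∈ B := by
        rw [show (⟨j - 1, by omega⟩ : Fin (m i)) = ⟨2 * t, hty⟩ from Fin.ext (by simp only [Fin.val_mk]; omega)]
        exact hw
      have := (S2 i (j - 1) (by omega) hw2).1
      rw [show j - 1 + 1 = j by omega] at this
      rw [this]; simp [show ¬ (j % 2 = 0) by omega]

/-- A Cartesian product `γ_1 □ ⋯ □ γ_k` of bicolored directed paths has a bikernel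
iff every factor `γ_i` has a bikernel. -/
theorem box_paths_bikernel_iff (k : ℕ) (m : Fin k → ℕ) (hm : ∀ i, 2 ≤ m i)
    (c : Fin k → ℕ → Fin 2) :
    (∃ B, IsBikernel (piBoxArc fun i => pathArc (m i) (c i) 0)
        (piBoxArc fun i => pathArc (m i) (c i) 1) B) ↔
      ∀ i, ∃ B, IsBikernel (pathArc (m i) (c i) 0) (pathArc (m i) (c i) 1) B := by
  constructor
  · intro hB i
    exact ⟨_, oneD_backward (hm i) (prod_forward hm hB i)⟩
  · intro h
    exact ⟨_, prod_backward hm (fun i => oneD_forward (hm i) (h i))⟩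
end

section
/- Let C_1 and C_2 be monochromatic directed cycles (each with all arcs of a single color). The Cartesian product C_1 □ C_2 has a bikernel by monochromatic paths if and only if C_1 and C_2 have the same length and opposite colors. -/
open Relation Set

section Bikernel

variable {X V W : Type*} {A1 A2 : X → X → Prop} {B : Set X}

theorem IsBikernel.eq_univ_of_right_eq_bot (hB : IsBikernel A1 ⊥ B) : B = univ := by
  refine eq_univ_of_forall fun v => by_contra fun hv => ?_
  obtain ⟨b, -, hbv⟩ := hB.2.2.2 v hv
  cases hbv <;> contradiction

theorem IsBikernel.eq_univ_of_left_eq_bot (hB : IsBikernel ⊥ A2 B) : B = univ := by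
  refine eq_univ_of_forall fun v => by_contra fun hv => ?_
  obtain ⟨b, -, hvb⟩ := hB.2.2.1 v hv
  cases hvb <;> contradiction

theorem isBikernel_iff_bijOn [Nonempty V] {f : X → V} {g : X → W}
    (hf : Function.Surjective f) (hg : Function.Surjective g)
    (h1 : ∀ p q, TransGen A1 p q ↔ f p = f q) (h2 : ∀ p q, TransGen A2 p q ↔ g p = g q) :
    IsBikernel A1 A2 B ↔ BijOn f B univ ∧ BijOn g B univ := by
  constructor
  · rintro ⟨-, hind, habs, hdom⟩
    refine ⟨⟨mapsTo_univ _ _, fun u hu v hv huv => ?_, fun y _ => ?_⟩,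
      ⟨mapsTo_univ _ _, fun u hu v hv huv => ?_, fun z _ => ?_⟩⟩
    · exact by_contra fun hne => (hind u hu v hv hne).1 ((h1 u v).2 huv)
    · obtain ⟨x, rfl⟩ := hf y
      by_cases hx : x ∈ B
      · exact ⟨x, hx, rfl⟩
      · obtain ⟨b, hb, hxb⟩ := habs x hx
        exact ⟨b, hb, ((h1 x b).1 hxb).symm⟩
    · exact by_contra fun hne => (hind u hu v hv hne).2 ((h2 u v).2 huv)
    · obtain ⟨x, rfl⟩ := hg z
      by_cases hx : x ∈ B
      · exact ⟨x, hx, rfl⟩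
      · obtain ⟨b, hb, hbx⟩ := hdom x hx
        exact ⟨b, hb, (h2 b x).1 hbx⟩
  · rintro ⟨hfB, hgB⟩
    obtain ⟨b, hb, -⟩ := hfB.surjOn (mem_univ (Classical.arbitrary V))
    refine ⟨⟨b, hb⟩, fun u hu v hv huv => ⟨?_, ?_⟩, fun x _ => ?_, fun x _ => ?_⟩
    · exact fun h => huv (hfB.injOn hu hv ((h1 u v).1 h))
    · exact fun h => huv (hgB.injOn hu hv ((h2 u v).1 h))
    · obtain ⟨b, hb, hbx⟩ := hfB.surjOn (mem_univ (f x))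
      exact ⟨b, hb, (h1 x b).2 hbx.symm⟩
    · obtain ⟨b, hb, hbx⟩ := hgB.surjOn (mem_univ (g x))
      exact ⟨b, hb, (h2 b x).2 hbx⟩

end Bikernel

section Transversal

variable {V W : Type*}

theorem exists_bijOn_fst_snd_iff [Finite V] [Finite W] :
    (∃ B : Set (V × W), BijOn Prod.fst B univ ∧ BijOn Prod.snd B univ) ↔
      Nat.card V = Nat.card W := by
  constructor
  · rintro ⟨B, hfst, hsnd⟩
    rw [← Nat.card_univ (α := V), ← Nat.card_univ (α := W),
      ← Nat.card_congr (hfst.equiv _), Nat.card_congr (hsnd.equiv _)]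
  · intro hcard
    obtain ⟨e⟩ := Finite.card_eq.mp hcard
    refine ⟨{p | e p.1 = p.2},
      ⟨mapsTo_univ _ _, fun p hp q hq h => ?_, fun v _ => ⟨(v, e v), rfl, rfl⟩⟩,
      ⟨mapsTo_univ _ _, fun p hp q hq h => ?_, fun w _ => ⟨(e.symm w, w), by simp, rfl⟩⟩⟩
    · exact Prod.ext h (hp.symm.trans (h ▸ hq))
    · exact Prod.ext (e.injective (hp.trans (h ▸ hq.symm))) h

end Transversal

section BoxArc

variable {V W : Type*} {R : V → V → Prop} {S : W → W → Prop} {p q : V × W}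

theorem boxArc_bot_right_iff : boxArc R ⊥ p q ↔ p.2 = q.2 ∧ R p.1 q.1 := by
  simp [boxArc]

theorem boxArc_bot_left_iff : boxArc ⊥ S p q ↔ p.1 = q.1 ∧ S p.2 q.2 := by
  simp [boxArc]

theorem transGen_boxArc_bot_iff (hR : ∀ x y, TransGen R x y) :
    TransGen (boxArc R ⊥) p q ↔ p.2 = q.2 := by
  refine ⟨fun h => ?_, fun h => ?_⟩
  · simpa [transGen_eq_self] using
      h.lift (p := Eq) Prod.snd fun _ _ hab => (boxArc_bot_right_iff.1 hab).1
  · obtain ⟨v, w⟩ := p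
    obtain ⟨v', w'⟩ := q
    subst h
    exact (hR v v').lift (fun x => (x, w)) (fun a b hab => Or.inr ⟨rfl, hab⟩)

theorem transGen_bot_boxArc_iff (hS : ∀ x y, TransGen S x y) :
    TransGen (boxArc ⊥ S) p q ↔ p.1 = q.1 := by
  refine ⟨fun h => ?_, fun h => ?_⟩
  · simpa [transGen_eq_self] using
      h.lift (p := Eq) Prod.fst fun _ _ hab => (boxArc_bot_left_iff.1 hab).1
  · obtain ⟨v, w⟩ := p
    obtain ⟨v', w'⟩ := q
    subst h
    exact (hS w w').lift (fun y => (v, y)) (fun a b hab => Or.inl ⟨rfl, hab⟩)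

theorem boxArc_bot_bot : boxArc (⊥ : V → V → Prop) (⊥ : W → W → Prop) = ⊥ := by
  ext p q; simp [boxArc]

theorem not_isBikernel_boxArc_bot (hR : ∃ x y, x ≠ y ∧ R x y) {B : Set (V × W)} :
    ¬ IsBikernel (boxArc R S) ⊥ B := by
  intro hB
  obtain ⟨⟨-, w⟩, -⟩ := hB.1
  obtain ⟨x, y, hne, hxy⟩ := hR
  obtain rfl := hB.eq_univ_of_right_eq_bot
  exact (hB.2.1 (x, w) trivial (y, w) trivial (by simpa using hne)).1
    (.single (Or.inr ⟨rfl, hxy⟩))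

theorem not_isBikernel_bot_boxArc (hR : ∃ x y, x ≠ y ∧ R x y) {B : Set (V × W)} :
    ¬ IsBikernel ⊥ (boxArc R S) B := by
  intro hB
  obtain ⟨⟨-, w⟩, -⟩ := hB.1
  obtain ⟨x, y, hne, hxy⟩ := hR
  obtain rfl := hB.eq_univ_of_left_eq_bot
  exact (hB.2.1 (x, w) trivial (y, w) trivial (by simpa using hne)).2
    (.single (Or.inr ⟨rfl, hxy⟩))

variable [Finite V] [Finite W] [Nonempty V] [Nonempty W]

theorem exists_isBikernel_boxArc_bot_iff (hR : ∀ x y, TransGen R x y)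
    (hS : ∀ x y, TransGen S x y) :
    (∃ B, IsBikernel (boxArc R ⊥) (boxArc ⊥ S) B) ↔ Nat.card V = Nat.card W := by
  simp_rw [isBikernel_iff_bijOn Prod.snd_surjective Prod.fst_surjective
    (fun _ _ => transGen_boxArc_bot_iff hR) (fun _ _ => transGen_bot_boxArc_iff hS), and_comm]
  exact exists_bijOn_fst_snd_iff

theorem exists_isBikernel_bot_boxArc_iff (hR : ∀ x y, TransGen R x y)
    (hS : ∀ x y, TransGen S x y) :
    (∃ B, IsBikernel (boxArc ⊥ S) (boxArc R ⊥) B) ↔ Nat.card V = Nat.card W := by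
  simp_rw [isBikernel_iff_bijOn Prod.fst_surjective Prod.snd_surjective
    (fun _ _ => transGen_bot_boxArc_iff hS) (fun _ _ => transGen_boxArc_bot_iff hR)]
  exact exists_bijOn_fst_snd_iff

end BoxArc

def dirCycle (n : ℕ) : Fin n → Fin n → Prop := fun x y => (y : ℕ) = ((x : ℕ) + 1) % n

theorem cycArc_const_self (n : ℕ) (c : Fin 2) : cycArc n (fun _ => c) c = dirCycle n := by
  ext; simp [cycArc, dirCycle]

theorem cycArc_const_of_ne (n : ℕ) {c col : Fin 2} (h : c ≠ col) :
    cycArc n (fun _ => c) col = ⊥ := by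
  ext; simp [cycArc, h]

theorem transGen_dirCycle : ∀ (n : ℕ) (x y : Fin n), TransGen (dirCycle n) x y
  | 0, x, _ => x.elim0
  | n + 1, x, y => by
    have step (i : Fin n) : dirCycle (n + 1) i.castSucc i.succ := by
      simp [dirCycle, Nat.mod_eq_of_lt (Nat.succ_lt_succ i.isLt)]
    have up : ∀ y, ReflTransGen (dirCycle (n + 1)) 0 y :=
      Fin.induction .refl fun i h => h.tail (step i)
    have down : ∀ x, ReflTransGen (dirCycle (n + 1)) x (Fin.last n) :=
      Fin.reverseInduction .refl fun i h => h.head (step i)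
    exact (TransGen.tail' (down x) (by simp [dirCycle])).trans_left (up y)

theorem exists_ne_dirCycle {n : ℕ} (hn : 2 ≤ n) : ∃ x y : Fin n, x ≠ y ∧ dirCycle n x y :=
  ⟨⟨0, by omega⟩, ⟨1, by omega⟩, by simp, by simp [dirCycle, Nat.mod_eq_of_lt hn]⟩

/-- The Cartesian product of two monochromatic directed cycles (of colors `b1`, `b2`)
has a bikernel iff the cycles have the same length and opposite colors. -/
theorem box_mono_cycles_bikernel_iff (n1 n2 : ℕ) (h1 : 2 ≤ n1) (h2 : 2 ≤ n2)
    (b1 b2 : Fin 2) :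
    (∃ B, IsBikernel
        (boxArc (cycArc n1 (fun _ => b1) 0) (cycArc n2 (fun _ => b2) 0))
        (boxArc (cycArc n1 (fun _ => b1) 1) (cycArc n2 (fun _ => b2) 1)) B) ↔
      (n1 = n2 ∧ b1 ≠ b2) := by
  have : NeZero n1 := ⟨by omega⟩
  have : NeZero n2 := ⟨by omega⟩
  have hC := transGen_dirCycle
  have h01 : (0 : Fin 2) ≠ 1 := zero_ne_one
  match b1, b2 with
  | 0, 0 =>
    rw [cycArc_const_self, cycArc_const_self, cycArc_const_of_ne _ h01,
      cycArc_const_of_ne _ h01, boxArc_bot_bot]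
    exact iff_of_false (not_exists.2 fun _ => not_isBikernel_boxArc_bot (exists_ne_dirCycle h1))
      (by simp)
  | 0, 1 =>
    rw [cycArc_const_self, cycArc_const_self, cycArc_const_of_ne _ h01,
      cycArc_const_of_ne _ h01.symm]
    simpa using exists_isBikernel_boxArc_bot_iff (hC n1) (hC n2)
  | 1, 0 =>
    rw [cycArc_const_self, cycArc_const_self, cycArc_const_of_ne _ h01,
      cycArc_const_of_ne _ h01.symm]
    simpa using exists_isBikernel_bot_boxArc_iff (hC n1) (hC n2)
  | 1, 1 =>
    rw [cycArc_const_self, cycArc_const_self, cycArc_const_of_ne _ h01.symm,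
      cycArc_const_of_ne _ h01.symm, boxArc_bot_bot]
    exact iff_of_false (not_exists.2 fun _ => not_isBikernel_bot_boxArc (exists_ne_dirCycle h1))
      (by simp)
end

section
/- Let G be a finite connected bicolored digraph containing no monochromatic directed cycles. Then G has a unique bikernel by monochromatic paths if and only if every critical vertex of G is supercritical; in that case the bikernel is exactly the set of critical vertices. -/
/-- A vertex is critical if it is a 1-sink (no outgoing color-1 arcs) or a 2-source
(no incoming color-2 arcs). -/
def Critical {V : Type*} (A1 A2 : V → V → Prop) (v : V) : Prop :=
  (∀ w, ¬ A1 v w) ∨ (∀ w, ¬ A2 w v)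

/-- A vertex is supercritical if it is both a 1-sink and a 2-source. -/
def Supercritical {V : Type*} (A1 A2 : V → V → Prop) (v : V) : Prop :=
  (∀ w, ¬ A1 v w) ∧ (∀ w, ¬ A2 w v)

/-- In a finite acyclic relation, every vertex reaches a sink. -/
theorem reach_sink {V : Type*} [Finite V] (R : V → V → Prop)
    (hac : ∀ v, ¬ Relation.TransGen R v v) (v : V) :
    ∃ s, Relation.ReflTransGen R v s ∧ ∀ w, ¬ R s w := by
  have : IsTrans V (fun a b => Relation.TransGen R b a) := ⟨fun a b c h1 h2 => h2.trans h1⟩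
  have : IsIrrefl V (fun a b => Relation.TransGen R b a) := ⟨fun a h => hac a h⟩
  have wf := Finite.wellFounded_of_trans_of_irrefl (fun a b : V => Relation.TransGen R b a)
  induction v using wf.induction with
  | _ v ih =>
    by_cases h : ∃ w, R v w
    · obtain ⟨w, hw⟩ := h
      obtain ⟨s, hs1, hs2⟩ := ih w (Relation.TransGen.single hw)
      exact ⟨s, Relation.ReflTransGen.head hw hs1, hs2⟩
    · exact ⟨v, .refl, fun w hw => h ⟨w, hw⟩⟩

/-- In a finite acyclic relation, every vertex is reached from a source. -/
theorem reach_source {V : Type*} [Finite V] (R : V → V → Prop)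
    (hac : ∀ v, ¬ Relation.TransGen R v v) (v : V) :
    ∃ s, Relation.ReflTransGen R s v ∧ ∀ w, ¬ R w s := by
  obtain ⟨s, hs1, hs2⟩ := reach_sink (fun a b => R b a)
    (fun u h => hac u ((Relation.transGen_swap).mp h)) v
  exact ⟨s, (Relation.reflTransGen_swap).mpr hs1, hs2⟩

theorem bikernel_subset_super {V : Type*} [Finite V] (A1 A2 : V → V → Prop)
    (hac1 : ∀ v, ¬ Relation.TransGen A1 v v)
    (hac2 : ∀ v, ¬ Relation.TransGen A2 v v)
    {B : Set V} (hB : IsBikernel A1 A2 B) :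
    (∀ v, Critical A1 A2 v → v ∈ B) ∧ (∀ v ∈ B, Supercritical A1 A2 v) := by
  obtain ⟨-, hind, habs, hdom⟩ := hB
  have hcrit : ∀ v, Critical A1 A2 v → v ∈ B := by
    intro v hv
    by_contra hvB
    rcases hv with h | h
    · obtain ⟨b, -, hp⟩ := habs v hvB
      obtain ⟨c, hc, -⟩ := (Relation.TransGen.head'_iff).mp hp
      exact h c hc
    · obtain ⟨b, -, hp⟩ := hdom v hvB
      obtain ⟨c, -, hc⟩ := (Relation.TransGen.tail'_iff).mp hp
      exact h c hc
  refine ⟨hcrit, fun v hv => ⟨?_, ?_⟩⟩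
  · intro w hw
    obtain ⟨s, hs1, hs2⟩ := reach_sink A1 hac1 w
    have hvs : Relation.TransGen A1 v s := Relation.TransGen.head' hw hs1
    have hne : v ≠ s := fun h => hac1 v (h ▸ hvs)
    exact (hind v hv s (hcrit s (Or.inl hs2)) hne).1 hvs
  · intro w hw
    obtain ⟨s, hs1, hs2⟩ := reach_source A2 hac2 w
    have hsv : Relation.TransGen A2 s v := Relation.TransGen.tail' hs1 hw
    have hne : s ≠ v := fun h => hac2 v (h ▸ hsv)
    exact (hind s (hcrit s (Or.inr hs2)) v hv hne).2 hsv

/-- A finite connected bicolored digraph with no monochromatic directed cycles has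
a unique bikernel iff every critical vertex is supercritical; in that case the
bikernel is exactly the set of critical vertices. -/
theorem acyclic_bikernel_iff {V : Type*} [Fintype V] [Nonempty V]
    (A1 A2 : V → V → Prop)
    (hconn : ∀ u v : V,
      Relation.ReflTransGen (fun a b => A1 a b ∨ A2 a b ∨ A1 b a ∨ A2 b a) u v)
    (hac1 : ∀ v, ¬ Relation.TransGen A1 v v)
    (hac2 : ∀ v, ¬ Relation.TransGen A2 v v) :
    ((∃! B, IsBikernel A1 A2 B) ↔
      ∀ v, Critical A1 A2 v → Supercritical A1 A2 v) ∧
    ((∀ v, Critical A1 A2 v → Supercritical A1 A2 v) →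
      IsBikernel A1 A2 {v | Critical A1 A2 v}) := by
  -- every bikernel is exactly the critical set
  have hEq : ∀ B : Set V, IsBikernel A1 A2 B → B = {v | Critical A1 A2 v} := by
    intro B hB
    obtain ⟨h1, h2⟩ := bikernel_subset_super A1 A2 hac1 hac2 hB
    ext v
    exact ⟨fun hv => Or.inl (h2 v hv).1, fun hv => h1 v hv⟩
  have hker : (∀ v, Critical A1 A2 v → Supercritical A1 A2 v) →
      IsBikernel A1 A2 {v | Critical A1 A2 v} := by
    intro h
    refine ⟨?_, ?_, ?_, ?_⟩
    · obtain ⟨v⟩ := ‹Nonempty V›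
      obtain ⟨s, -, hs⟩ := reach_sink A1 hac1 v
      exact ⟨s, Or.inl hs⟩
    · intro u hu v hv hne
      constructor
      · intro hp
        obtain ⟨c, hc, -⟩ := (Relation.TransGen.head'_iff).mp hp
        exact (h u hu).1 c hc
      · intro hp
        obtain ⟨c, -, hc⟩ := (Relation.TransGen.tail'_iff).mp hp
        exact (h v hv).2 c hc
    · intro v hv
      have : ∃ w, A1 v w := by
        by_contra hw
        push_neg at hw
        exact hv (Or.inl fun w => hw w)
      obtain ⟨w, hw⟩ := this
      obtain ⟨s, hs1, hs2⟩ := reach_sink A1 hac1 w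
      exact ⟨s, Or.inl hs2, Relation.TransGen.head' hw hs1⟩
    · intro v hv
      have : ∃ w, A2 w v := by
        by_contra hw
        push_neg at hw
        exact hv (Or.inr fun w => hw w)
      obtain ⟨w, hw⟩ := this
      obtain ⟨s, hs1, hs2⟩ := reach_source A2 hac2 w
      exact ⟨s, Or.inr hs2, Relation.TransGen.tail' hs1 hw⟩
  refine ⟨⟨fun hex v hv => ?_, fun h => ?_⟩, hker⟩
  · obtain ⟨B, hB, -⟩ := hex
    obtain ⟨h1, h2⟩ := bikernel_subset_super A1 A2 hac1 hac2 hB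
    exact h2 v (h1 v hv)
  · exact ⟨{v | Critical A1 A2 v}, hker h, fun B hB => hEq B hB⟩
end

section
/- A bicolored directed tree T has a bikernel by monochromatic paths if and only if every critical vertex of T is supercritical. -/
/-!
In a tree without antiparallel arcs neither color class has a directed cycle: a cycle through
the arc `v → x` would give a path from `x` back to `v` avoiding the bridge `vx`. By finiteness
every vertex therefore reaches a 1-sink along color 1 and is reached from a 2-source along
color 2. So if every critical vertex is supercritical, the supercritical vertices form a
bikernel. Conversely, a bikernel contains every critical vertex, and by independence and
acyclicity none of its vertices has an outgoing 1-arc or an incoming 2-arc.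
-/

open Relation

section Acyclic

variable {V : Type*} {A : V → V → Prop}

lemma SimpleGraph.reachable_deleteEdges_of_reflTransGen {G : SimpleGraph V}
    (hsub : ∀ u w, A u w → G.Adj u w) {v x b : V} (hxv : ¬ A x v)
    (h : ReflTransGen A x b) : (G.deleteEdges {s(v, x)}).Reachable x b := by
  induction h with
  | refl => rfl
  | @tail a c _ hac ih =>
    by_cases he : s(a, c) = s(v, x)
    · rcases Sym2.eq_iff.mp he with ⟨-, rfl⟩ | ⟨rfl, rfl⟩
      · rfl
      · exact absurd hac hxv
    · exact ih.trans (SimpleGraph.Adj.reachable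
        (SimpleGraph.deleteEdges_adj.mpr ⟨hsub a c hac, he⟩))

lemma SimpleGraph.IsAcyclic.not_transGen_self {G : SimpleGraph V} (hG : G.IsAcyclic)
    (hsub : ∀ u w, A u w → G.Adj u w) (hasymm : ∀ u w, A u w → ¬ A w u) (v : V) :
    ¬ TransGen A v v := by
  intro hv
  obtain ⟨x, hvx, hxv⟩ := TransGen.head'_iff.mp hv
  have hbridge := SimpleGraph.isAcyclic_iff_forall_adj_isBridge.mp hG (hsub v x hvx)
  exact SimpleGraph.isBridge_iff.mp hbridge
    (reachable_deleteEdges_of_reflTransGen hsub (hasymm v x hvx) hxv).symm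

variable [Finite V]

lemma exists_reflTransGen_sink (hA : ∀ v, ¬ TransGen A v v) (v : V) :
    ∃ b, ReflTransGen A v b ∧ ∀ w, ¬ A b w := by
  let R := Function.swap (TransGen A)
  have : IsTrans V R := ⟨fun _ _ _ h₁ h₂ => h₂.trans h₁⟩
  have : Std.Irrefl R := ⟨hA⟩
  obtain ⟨b, hvb, hmin⟩ := (Finite.wellFounded_of_trans_of_irrefl R).has_min
    {b | ReflTransGen A v b} ⟨v, ReflTransGen.refl⟩
  exact ⟨b, hvb, fun w hbw => hmin w (ReflTransGen.tail hvb hbw) (TransGen.single hbw)⟩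

lemma exists_reflTransGen_source (hA : ∀ v, ¬ TransGen A v v) (v : V) :
    ∃ b, ReflTransGen A b v ∧ ∀ w, ¬ A w b := by
  obtain ⟨b, hvb, hb⟩ :=
    exists_reflTransGen_sink (A := Function.swap A) (fun u h => hA u (transGen_swap.mp h)) v
  exact ⟨b, reflTransGen_swap.mp hvb, hb⟩

end Acyclic

section Bikernel

variable {V : Type*} {A1 A2 : V → V → Prop} {B : Set V} {v : V}

lemma IsBikernel.mem_of_critical (hB : IsBikernel A1 A2 B) (hv : Critical A1 A2 v) :
    v ∈ B := by
  obtain ⟨-, -, habs, hdom⟩ := hB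
  by_contra hvB
  rcases hv with hsink | hsource
  · obtain ⟨b, -, hvb⟩ := habs v hvB
    obtain ⟨w, hvw, -⟩ := TransGen.head'_iff.mp hvb
    exact hsink w hvw
  · obtain ⟨b, -, hbv⟩ := hdom v hvB
    obtain ⟨w, -, hwv⟩ := TransGen.tail'_iff.mp hbv
    exact hsource w hwv

lemma IsBikernel.supercritical_of_mem (hB : IsBikernel A1 A2 B)
    (h1 : ∀ v, ¬ TransGen A1 v v) (h2 : ∀ v, ¬ TransGen A2 v v) (hv : v ∈ B) :
    Supercritical A1 A2 v := by
  obtain ⟨-, hind, habs, hdom⟩ := hB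
  constructor
  · intro w hvw
    obtain ⟨b, hbB, hvb⟩ : ∃ b ∈ B, TransGen A1 v b := by
      by_cases hwB : w ∈ B
      · exact ⟨w, hwB, .single hvw⟩
      · obtain ⟨b, hbB, hwb⟩ := habs w hwB
        exact ⟨b, hbB, hwb.head hvw⟩
    by_cases hvb' : v = b
    · exact h1 v (hvb' ▸ hvb)
    · exact (hind v hv b hbB hvb').1 hvb
  · intro w hwv
    obtain ⟨b, hbB, hbv⟩ : ∃ b ∈ B, TransGen A2 b v := by
      by_cases hwB : w ∈ B
      · exact ⟨w, hwB, .single hwv⟩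
      · obtain ⟨b, hbB, hbw⟩ := hdom w hwB
        exact ⟨b, hbB, hbw.tail hwv⟩
    by_cases hbv' : b = v
    · exact h2 v (hbv' ▸ hbv)
    · exact (hind b hbB v hv hbv').2 hbv

lemma isBikernel_setOf_supercritical [Finite V] [Nonempty V]
    (h1 : ∀ v, ¬ TransGen A1 v v) (h2 : ∀ v, ¬ TransGen A2 v v)
    (hcrit : ∀ v, Critical A1 A2 v → Supercritical A1 A2 v) :
    IsBikernel A1 A2 {v | Supercritical A1 A2 v} := by
  refine ⟨?_, ?_, fun v hv => ?_, fun v hv => ?_⟩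
  · obtain ⟨b, -, hb⟩ := exists_reflTransGen_sink h1 (Classical.arbitrary V)
    exact ⟨b, hcrit b (.inl hb)⟩
  · rintro u ⟨hu, -⟩ w ⟨-, hw⟩ -
    refine ⟨fun huw => ?_, fun huw => ?_⟩
    · obtain ⟨x, hux, -⟩ := TransGen.head'_iff.mp huw
      exact hu x hux
    · obtain ⟨x, -, hxw⟩ := TransGen.tail'_iff.mp huw
      exact hw x hxw
  · obtain ⟨b, hvb, hb⟩ := exists_reflTransGen_sink h1 v
    have hbB : Supercritical A1 A2 b := hcrit b (.inl hb)
    rcases reflTransGen_iff_eq_or_transGen.mp hvb with rfl | hvb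
    · exact absurd hbB hv
    · exact ⟨b, hbB, hvb⟩
  · obtain ⟨b, hbv, hb⟩ := exists_reflTransGen_source h2 v
    have hbB : Supercritical A1 A2 b := hcrit b (.inr hb)
    rcases reflTransGen_iff_eq_or_transGen.mp hbv with rfl | hbv
    · exact absurd hbB hv
    · exact ⟨b, hbB, hbv⟩

end Bikernel

/-- A bicolored directed tree has a bikernel iff every critical vertex is
supercritical. The underlying undirected graph of the digraph (which has no pair
of antiparallel arcs) is required to be a tree. -/
theorem tree_bikernel_iff {V : Type*} [Fintype V] (A1 A2 : V → V → Prop)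
    (hanti : ∀ u v, ¬ ((A1 u v ∨ A2 u v) ∧ (A1 v u ∨ A2 v u)))
    (htree : (SimpleGraph.mk (fun a b => A1 a b ∨ A2 a b ∨ A1 b a ∨ A2 b a)
        ⟨fun a b h => by tauto⟩
        ⟨fun a h => hanti a a (by tauto)⟩).IsTree) :
    (∃ B, IsBikernel A1 A2 B) ↔
      ∀ v, Critical A1 A2 v → Supercritical A1 A2 v := by
  have h1 : ∀ v, ¬ TransGen A1 v v := htree.isAcyclic.not_transGen_self
    (fun _ _ h => .inl h) (fun u w h h' => hanti u w ⟨.inl h, .inl h'⟩)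
  have h2 : ∀ v, ¬ TransGen A2 v v := htree.isAcyclic.not_transGen_self
    (fun _ _ h => .inr (.inl h)) (fun u w h h' => hanti u w ⟨.inr h, .inr h'⟩)
  constructor
  · rintro ⟨B, hB⟩ v hv
    exact hB.supercritical_of_mem h1 h2 (hB.mem_of_critical hv)
  · intro hcrit
    have : Nonempty V := htree.connected.nonempty
    exact ⟨_, isBikernel_setOf_supercritical h1 h2 hcrit⟩
end

section
/- Let D be a bicolored directed cycle with one chord that has a bikernel by monochromatic paths, and let C be the base cycle (D minus the chord). Then C contains no monochromatic directed path with four vertices (three consecutive arcs of the same color). -/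
/-- The arc relation, for color `col`, of a bicolored directed cycle on `Fin n`
(arcs `(x_i, x_{(i+1) mod n})`, the arc leaving `x_i` colored `c i`; color 1 is `0`,
color 2 is `1`) together with one chord `(a, b)` of color `d`. -/
def chordCycArc (n : ℕ) (c : ℕ → Fin 2) (a b : Fin n) (d : Fin 2) (col : Fin 2) :
    Fin n → Fin n → Prop :=
  fun x y => ((y : ℕ) = ((x : ℕ) + 1) % n ∧ c (x : ℕ) = col) ∨
    (x = a ∧ y = b ∧ d = col)

/-- If a bicolored directed cycle with one chord has a bikernel, then its base cycle
contains no monochromatic path on four vertices (three consecutive arcs of the same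
color). -/
theorem chord_cycle_no_mono_three_arcs (n : ℕ) (hn : 4 ≤ n) (c : ℕ → Fin 2)
    (a b : Fin n) (hab : a ≠ b) (hchord : (b : ℕ) ≠ ((a : ℕ) + 1) % n) (d : Fin 2)
    (hB : ∃ B, IsBikernel (chordCycArc n c a b d 0) (chordCycArc n c a b d 1) B) :
    ∀ i, i < n →
      ¬ (c i = c ((i + 1) % n) ∧ c ((i + 1) % n) = c ((i + 2) % n)) := by
  intro i hi hcc
  obtain ⟨B, hne, hind, habs, hdom⟩ := hB
  have hn0 : 0 < n := by omega
  let v : ℕ → Fin n := fun j => ⟨(i + j) % n, Nat.mod_lt _ hn0⟩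
  have hval : ∀ j, (v j : ℕ) = (i + j) % n := fun _ => rfl
  have hvne : ∀ s t, s < t → t - s < n → v s ≠ v t := by
    intro s t hst htn heq
    have h1 : (i + s) % n = (i + t) % n := congrArg Fin.val heq
    have h2 : n ∣ (i + t) - (i + s) := (Nat.modEq_iff_dvd' (by omega)).mp h1
    have h3 : (i + t) - (i + s) = t - s := by omega
    rw [h3] at h2
    have := Nat.le_of_dvd (by omega) h2
    omega
  have harc : ∀ (j : ℕ) (col : Fin 2), c ((i + j) % n) = col →
      chordCycArc n c a b d col (v j) (v (j + 1)) := by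
    intro j col hc
    left
    refine ⟨?_, hc⟩
    show (i + (j + 1)) % n = ((i + j) % n + 1) % n
    rw [Nat.mod_add_mod, Nat.add_assoc]
  have hk0 : c ((i + 0) % n) = c i := by
    rw [Nat.add_zero, Nat.mod_eq_of_lt hi]
  have hk1 : c ((i + 1) % n) = c i := hcc.1.symm
  have hk2 : c ((i + 2) % n) = c i := hcc.2.symm.trans hk1
  have hlast : ∀ {r : Fin n → Fin n → Prop} {u w : Fin n},
      Relation.TransGen r u w → ∃ x, r x w := by
    intro r u w hp
    cases hp with
    | single h => exact ⟨_, h⟩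
    | tail _ h => exact ⟨_, h⟩
  have hfirst : ∀ {r : Fin n → Fin n → Prop} {u w : Fin n},
      Relation.TransGen r u w → ∃ x, r u x := by
    intro r u w hp
    induction hp with
    | single h => exact ⟨_, h⟩
    | tail _ _ ih => exact ih
  have hk01 : c i = 0 ∨ c i = 1 := by
    have h2 : (c i).val = 0 ∨ (c i).val = 1 := by omega
    rcases h2 with h | h
    · exact Or.inl (Fin.ext (by simpa using h))
    · exact Or.inr (Fin.ext (by simpa using h))
  rcases hk01 with hk' | hk'
  · -- all three arcs have color index 0 (color 1): use domination by color 2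
    have hnoin : ∀ j : ℕ, c ((i + j) % n) = c i → v (j + 1) ≠ b →
        ∀ x, ¬ chordCycArc n c a b d 1 x (v (j + 1)) := by
      intro j hcj hjb x hx
      rcases hx with ⟨heq, hcx⟩ | ⟨_, hvb, _⟩
      · have h1 : (i + (j + 1)) % n = ((x : ℕ) + 1) % n := heq
        have h1' : ((i + j) + 1) % n = ((x : ℕ) + 1) % n := by
          rw [← h1, Nat.add_assoc]
        have h2 : (x : ℕ) % n = (i + j) % n :=
          Nat.ModEq.add_right_cancel' 1 h1'.symm
        have h3 : (x : ℕ) = (i + j) % n := by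
          rw [Nat.mod_eq_of_lt x.isLt] at h2; exact h2
        rw [h3] at hcx
        have : (0 : Fin 2) = 1 := by rw [← hk']; exact hcj.symm.trans hcx
        exact absurd this (by decide)
      · exact hjb hvb
    have hmem : ∀ j : ℕ, c ((i + j) % n) = c i → v (j + 1) ≠ b → v (j + 1) ∈ B := by
      intro j hcj hjb
      by_contra hvB
      obtain ⟨b', _, hp⟩ := hdom _ hvB
      obtain ⟨x, hx⟩ := hlast hp
      exact hnoin j hcj hjb x hx
    have hpath12 : Relation.TransGen (chordCycArc n c a b d 0) (v 1) (v 2) :=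
      Relation.TransGen.single (harc 1 0 (hk1.trans hk'))
    have hpath23 : Relation.TransGen (chordCycArc n c a b d 0) (v 2) (v 3) :=
      Relation.TransGen.single (harc 2 0 (hk2.trans hk'))
    have hpath13 : Relation.TransGen (chordCycArc n c a b d 0) (v 1) (v 3) :=
      hpath12.tail (harc 2 0 (hk2.trans hk'))
    by_cases hb1 : v 1 = b
    · have h2b : v 2 ≠ b := fun h => hvne 1 2 (by omega) (by omega) (hb1.trans h.symm)
      have h3b : v 3 ≠ b := fun h => hvne 1 3 (by omega) (by omega) (hb1.trans h.symm)
      have m2 := hmem 1 hk1 h2b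
      have m3 := hmem 2 hk2 h3b
      exact (hind _ m2 _ m3 (hvne 2 3 (by omega) (by omega))).1 hpath23
    · by_cases hb2 : v 2 = b
      · have h3b : v 3 ≠ b := fun h => hvne 2 3 (by omega) (by omega) (hb2.trans h.symm)
        have m1 := hmem 0 hk0 hb1
        have m3 := hmem 2 hk2 h3b
        exact (hind _ m1 _ m3 (hvne 1 3 (by omega) (by omega))).1 hpath13
      · have m1 := hmem 0 hk0 hb1
        have m2 := hmem 1 hk1 hb2
        exact (hind _ m1 _ m2 (hvne 1 2 (by omega) (by omega))).1 hpath12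
  · -- all three arcs have color index 1 (color 2): use absorption by color 1
    have hnoout : ∀ j : ℕ, c ((i + j) % n) = c i → v j ≠ a →
        ∀ x, ¬ chordCycArc n c a b d 0 (v j) x := by
      intro j hcj hja x hx
      rcases hx with ⟨_, hcx⟩ | ⟨hva, _, _⟩
      · have hcx' : c ((i + j) % n) = 0 := hcx
        have : (1 : Fin 2) = 0 := by rw [← hk']; exact hcj.symm.trans hcx'
        exact absurd this (by decide)
      · exact hja hva
    have hmem : ∀ j : ℕ, c ((i + j) % n) = c i → v j ≠ a → v j ∈ B := by
      intro j hcj hja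
      by_contra hvB
      obtain ⟨b', _, hp⟩ := habs _ hvB
      obtain ⟨x, hx⟩ := hfirst hp
      exact hnoout j hcj hja x hx
    have hpath01 : Relation.TransGen (chordCycArc n c a b d 1) (v 0) (v 1) :=
      Relation.TransGen.single (harc 0 1 (hk0.trans hk'))
    have hpath12 : Relation.TransGen (chordCycArc n c a b d 1) (v 1) (v 2) :=
      Relation.TransGen.single (harc 1 1 (hk1.trans hk'))
    have hpath02 : Relation.TransGen (chordCycArc n c a b d 1) (v 0) (v 2) :=
      hpath01.tail (harc 1 1 (hk1.trans hk'))
    by_cases ha0 : v 0 = a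
    · have h1a : v 1 ≠ a := fun h => hvne 0 1 (by omega) (by omega) (ha0.trans h.symm)
      have h2a : v 2 ≠ a := fun h => hvne 0 2 (by omega) (by omega) (ha0.trans h.symm)
      have m1 := hmem 1 hk1 h1a
      have m2 := hmem 2 hk2 h2a
      exact (hind _ m1 _ m2 (hvne 1 2 (by omega) (by omega))).2 hpath12
    · by_cases ha1 : v 1 = a
      · have h2a : v 2 ≠ a := fun h => hvne 1 2 (by omega) (by omega) (ha1.trans h.symm)
        have m0 := hmem 0 hk0 ha0
        have m2 := hmem 2 hk2 h2a
        exact (hind _ m0 _ m2 (hvne 0 2 (by omega) (by omega))).2 hpath02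
      · have m0 := hmem 0 hk0 ha0
        have m1 := hmem 1 hk1 ha1
        exact (hind _ m0 _ m1 (hvne 0 1 (by omega) (by omega))).2 hpath01
end

section
/- Let D be a bicolored directed cycle with one chord having a bikernel, and let C be the base cycle. Then C contains at most one monochromatic path (x,y,z) of two consecutive same-colored arcs, and if such a path exists, the chord of D must have y as an endpoint. -/
open Relation

namespace IsBikernel

variable {V : Type*} {A₁ A₂ : V → V → Prop} {B : Set V} {u v : V}

theorem swap (hB : IsBikernel A₁ A₂ B) : IsBikernel (Function.swap A₂) (Function.swap A₁) B := by
  obtain ⟨hne, hind, habs, hdom⟩ := hB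
  simp only [IsBikernel, transGen_swap]
  exact ⟨hne, fun u hu v hv huv => (hind v hv u hu huv.symm).symm, hdom, habs⟩

theorem exists_adj₁_of_notMem (hB : IsBikernel A₁ A₂ B) (hv : v ∉ B) : ∃ w, A₁ v w := by
  obtain ⟨_, _, hvb⟩ := hB.2.2.1 v hv
  exact TransGen.head'_iff.1 hvb |>.imp fun _ h => h.1

theorem exists_adj₂_of_notMem (hB : IsBikernel A₁ A₂ B) (hv : v ∉ B) : ∃ u, A₂ u v := by
  obtain ⟨_, _, hbv⟩ := hB.2.2.2 v hv
  exact TransGen.tail'_iff.1 hbv |>.imp fun _ h => h.2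

theorem mem_of_forall_not_adj₂ (hB : IsBikernel A₁ A₂ B) (hv : ∀ u, ¬ A₂ u v) : v ∈ B :=
  by_contra fun hvB => (hB.exists_adj₂_of_notMem hvB).elim hv

theorem notMem_of_transGen₁ (hB : IsBikernel A₁ A₂ B) (hu : u ∈ B) (huv : u ≠ v)
    (h : TransGen A₁ u v) : v ∉ B :=
  fun hv => (hB.2.1 u hu v hv huv).1 h

/-- `m` must lie in `B`, which forces `q` out of `B`; `hq` is the graph-specific step: once `q` has
the colour-2 in-arc and colour-1 out-arc that domination and absorption demand, `q → r` is a
colour-1 arc into a vertex `r` that no colour-2 arc enters, so `r ∈ B` too. -/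
theorem false_of_forced_path (hB : IsBikernel A₁ A₂ B) {m q r : V} (hmq : m ≠ q) (hmr : m ≠ r)
    (hm : ∀ u, ¬ A₂ u m) (hA : A₁ m q)
    (hq : (∃ u, A₂ u q) → (∃ w, A₁ q w) → A₁ q r ∧ ∀ u, ¬ A₂ u r) : False := by
  have hmB := hB.mem_of_forall_not_adj₂ hm
  have hqB := hB.notMem_of_transGen₁ hmB hmq (.single hA)
  obtain ⟨hqr, hr⟩ := hq (hB.exists_adj₂_of_notMem hqB) (hB.exists_adj₁_of_notMem hqB)
  exact hB.notMem_of_transGen₁ hmB hmr (.tail (.single hA) hqr) (hB.mem_of_forall_not_adj₂ hr)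

end IsBikernel

theorem coe_finRotate_eq_mod {n : ℕ} (x : Fin n) : (finRotate n x : ℕ) = (x + 1) % n := by
  have := x.neZero
  rw [finRotate_apply, Fin.val_add, Fin.val_one', Nat.add_mod_mod]

theorem finRotate_apply_ne_self {n : ℕ} (hn : 2 ≤ n) (x : Fin n) : finRotate n x ≠ x :=
  Equiv.Perm.mem_support.1 (support_finRotate_of_le hn ▸ Finset.mem_univ x)

theorem finRotate_apply_apply_ne_self {n : ℕ} (hn : 3 ≤ n) (x : Fin n) :
    finRotate n (finRotate n x) ≠ x := by
  intro h
  have hval := congrArg Fin.val h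
  rw [coe_finRotate_eq_mod, coe_finRotate_eq_mod, Nat.mod_add_mod] at hval
  have hmod : (x : ℕ) ≡ x + 1 + 1 [MOD n] := by
    rw [Nat.ModEq, hval, Nat.mod_eq_of_lt x.isLt]
  have h2 : n ∣ 2 := by
    simpa [show (x : ℕ) + 1 + 1 - x = 2 by omega] using (Nat.modEq_iff_dvd' (by omega)).1 hmod
  exact absurd (Nat.le_of_dvd two_pos h2) (by omega)

section ChordCycle

variable {n : ℕ} {c : ℕ → Fin 2} {a b : Fin n} {d col : Fin 2} {x y u : Fin n}

theorem chordCycArc_iff : chordCycArc n c a b d col x y ↔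
    (y = finRotate n x ∧ c x = col) ∨ (x = a ∧ y = b ∧ d = col) := by
  rw [chordCycArc, ← coe_finRotate_eq_mod, ← Fin.ext_iff]

theorem chordCycArc_finRotate (hx : c x = col) : chordCycArc n c a b d col x (finRotate n x) :=
  chordCycArc_iff.2 (.inl ⟨rfl, hx⟩)

theorem chordCycArc_eq_chord_of_color_ne (h : chordCycArc n c a b d col x y) (hx : c x ≠ col) :
    x = a ∧ y = b ∧ d = col :=
  (chordCycArc_iff.1 h).resolve_left fun h => hx h.2

theorem chordCycArc_finRotate_eq_chord_of_color_ne (h : chordCycArc n c a b d col u (finRotate n x))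
    (hx : c x ≠ col) : u = a ∧ finRotate n x = b ∧ d = col :=
  (chordCycArc_iff.1 h).resolve_left fun h => hx ((finRotate n).injective h.1 ▸ h.2)

variable {B : Set (Fin n)}

theorem IsBikernel.chordCycArc_head_of_mono_zero (hn : 3 ≤ n)
    (hB : IsBikernel (chordCycArc n c a b d 0) (chordCycArc n c a b d 1) B)
    (hx : c x = 0) (hm : c (finRotate n x) = 0) : finRotate n x = b ∧ d = 1 := by
  by_contra hmb
  refine hB.false_of_forced_path (finRotate_apply_ne_self (by omega) _).symm
    ((finRotate n).injective.ne (finRotate_apply_apply_ne_self hn x).symm)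
    (fun u hu => hmb (chordCycArc_finRotate_eq_chord_of_color_ne hu (by rw [hx]; decide)).2)
    (chordCycArc_finRotate hm) ?_
  rintro ⟨u, hu⟩ ⟨w, hw⟩
  obtain ⟨-, hqb, hd⟩ := chordCycArc_finRotate_eq_chord_of_color_ne hu (by rw [hm]; decide)
  have hq : c (finRotate n (finRotate n x)) = 0 := by
    by_contra hq
    exact absurd (hd.symm.trans (chordCycArc_eq_chord_of_color_ne hw hq).2.2) (by decide)
  refine ⟨chordCycArc_finRotate hq, fun u hu => ?_⟩
  obtain ⟨-, hrb, -⟩ := chordCycArc_finRotate_eq_chord_of_color_ne hu (by rw [hq]; decide)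
  exact finRotate_apply_ne_self (by omega) _ (hrb.trans hqb.symm)

theorem IsBikernel.chordCycArc_tail_of_mono_one (hn : 3 ≤ n)
    (hB : IsBikernel (chordCycArc n c a b d 0) (chordCycArc n c a b d 1) B)
    (hx : c x = 1) (hm : c (finRotate n x) = 1) : finRotate n x = a ∧ d = 0 := by
  obtain ⟨r, rfl⟩ := (finRotate n).surjective x
  by_contra hma
  refine hB.swap.false_of_forced_path (finRotate_apply_ne_self (by omega) _)
    (finRotate_apply_apply_ne_self hn r)
    (fun u hu => hma <|
      (chordCycArc_eq_chord_of_color_ne hu (by rw [hm]; decide)).imp_right And.right)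
    (chordCycArc_finRotate hx) ?_
  rintro ⟨u, hu⟩ ⟨w, hw⟩
  obtain ⟨hqa, -, hd⟩ := chordCycArc_eq_chord_of_color_ne hu (by rw [hx]; decide)
  have hr : c r = 1 := by
    by_contra hr
    exact absurd (hd.symm.trans (chordCycArc_finRotate_eq_chord_of_color_ne hw hr).2.2) (by decide)
  refine ⟨chordCycArc_finRotate hr, fun u hu => ?_⟩
  obtain ⟨hra, -, -⟩ := chordCycArc_eq_chord_of_color_ne hu (by rw [hr]; decide)
  exact finRotate_apply_ne_self (by omega) _ (hqa.trans hra.symm)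

theorem IsBikernel.chordCycArc_endpoint_of_mono (hn : 3 ≤ n)
    (hB : IsBikernel (chordCycArc n c a b d 0) (chordCycArc n c a b d 1) B)
    (hx : c x = c (finRotate n x)) : (finRotate n x = a ∧ d = 0) ∨ (finRotate n x = b ∧ d = 1) := by
  rcases Fin.exists_fin_two.1 ⟨c x, rfl⟩ with h | h
  · exact .inr (hB.chordCycArc_head_of_mono_zero hn h (hx ▸ h))
  · exact .inl (hB.chordCycArc_tail_of_mono_one hn h (hx ▸ h))

theorem IsBikernel.chordCycArc_mono_unique (hn : 3 ≤ n)
    (hB : IsBikernel (chordCycArc n c a b d 0) (chordCycArc n c a b d 1) B)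
    (hx : c x = c (finRotate n x)) (hy : c y = c (finRotate n y)) : x = y := by
  refine (finRotate n).injective ?_
  rcases hB.chordCycArc_endpoint_of_mono hn hx with ⟨hxa, hd⟩ | ⟨hxb, hd⟩ <;>
    rcases hB.chordCycArc_endpoint_of_mono hn hy with ⟨hya, hd'⟩ | ⟨hyb, hd'⟩
  · exact hxa.trans hya.symm
  · exact absurd (hd.symm.trans hd') (by decide)
  · exact absurd (hd.symm.trans hd') (by decide)
  · exact hxb.trans hyb.symm

end ChordCycle

theorem chord_cycle_at_most_one_mono_two_arcs_general (n : ℕ) (hn : 4 ≤ n) (c : ℕ → Fin 2)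
    (a b : Fin n) (d : Fin 2)
    (hB : ∃ B, IsBikernel (chordCycArc n c a b d 0) (chordCycArc n c a b d 1) B) :
    (∀ i, i < n → ∀ j, j < n →
      c i = c ((i + 1) % n) → c j = c ((j + 1) % n) → i = j) ∧
    (∀ i, i < n → c i = c ((i + 1) % n) →
      ((a : ℕ) = (i + 1) % n ∨ (b : ℕ) = (i + 1) % n)) := by
  obtain ⟨B, hB⟩ := hB
  have hmono : ∀ i (hi : i < n), c i = c ((i + 1) % n) →
      c (⟨i, hi⟩ : Fin n) = c (finRotate n ⟨i, hi⟩) := fun i hi hc => by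
    rwa [coe_finRotate_eq_mod]
  refine ⟨fun i hi j hj hci hcj => congrArg Fin.val
    (hB.chordCycArc_mono_unique (by omega) (hmono i hi hci) (hmono j hj hcj)), fun i hi hci => ?_⟩
  rcases hB.chordCycArc_endpoint_of_mono (by omega) (hmono i hi hci) with ⟨h, -⟩ | ⟨h, -⟩
  · exact .inl (by rw [← h, coe_finRotate_eq_mod])
  · exact .inr (by rw [← h, coe_finRotate_eq_mod])

/-- If a bicolored directed cycle with one chord has a bikernel, then the base cycle
has at most one monochromatic path of two consecutive arcs, and if such a path
(with middle vertex `x_{(i+1) mod n}`) exists, that middle vertex is an endpoint of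
the chord. -/
theorem chord_cycle_at_most_one_mono_two_arcs (n : ℕ) (hn : 4 ≤ n) (c : ℕ → Fin 2)
    (a b : Fin n) (hab : a ≠ b) (hchord : (b : ℕ) ≠ ((a : ℕ) + 1) % n) (d : Fin 2)
    (hB : ∃ B, IsBikernel (chordCycArc n c a b d 0) (chordCycArc n c a b d 1) B) :
    (∀ i, i < n → ∀ j, j < n →
      c i = c ((i + 1) % n) → c j = c ((j + 1) % n) → i = j) ∧
    (∀ i, i < n → c i = c ((i + 1) % n) →
      ((a : ℕ) = (i + 1) % n ∨ (b : ℕ) = (i + 1) % n)) :=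
  chord_cycle_at_most_one_mono_two_arcs_general n hn c a b d hB
end

section
/- Let D be a bicolored directed cycle with a chord, B a bikernel of D, and C = (v_1,...,v_n) its base cycle. If (x,y,z) is a path in C such that arc (x,y) has color 1 and arc (y,z) has color 2, then y ∈ B. -/
private lemma first_arc {V : Type*} {r : V → V → Prop} {a b : V}
    (h : Relation.TransGen r a b) : ∃ c, r a c := by
  induction h with
  | single h => exact ⟨_, h⟩
  | tail _ _ ih => exact ih

private lemma last_arc {V : Type*} {r : V → V → Prop} {a b : V}
    (h : Relation.TransGen r a b) : ∃ c, r c b := by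
  cases h with
  | single h => exact ⟨_, h⟩
  | tail _ h => exact ⟨_, h⟩

private lemma succ_mod_inj_s18 {n i w : ℕ} (hi : i < n) (hw : w < n)
    (h : (i + 1) % n = (w + 1) % n) : i = w := by
  rcases Nat.lt_or_ge (i + 1) n with h1 | h1 <;>
    rcases Nat.lt_or_ge (w + 1) n with h2 | h2
  · rw [Nat.mod_eq_of_lt h1, Nat.mod_eq_of_lt h2] at h; omega
  · have hw1 : w + 1 = n := by omega
    rw [Nat.mod_eq_of_lt h1, hw1, Nat.mod_self] at h; omega
  · have hi1 : i + 1 = n := by omega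
    rw [Nat.mod_eq_of_lt h2, hi1, Nat.mod_self] at h; omega
  · omega


/-- Let `B` be a bikernel of a bicolored directed cycle with a chord. If in the base
cycle the arc leaving `x_i` has color 1 and the next arc has color 2, then the
middle vertex `x_{(i+1) mod n}` belongs to `B`. -/
theorem chord_cycle_mem_bikernel (n : ℕ) (hn : 4 ≤ n) (c : ℕ → Fin 2)
    (a b : Fin n) (hab : a ≠ b) (hchord : (b : ℕ) ≠ ((a : ℕ) + 1) % n) (d : Fin 2)
    (B : Set (Fin n))
    (hB : IsBikernel (chordCycArc n c a b d 0) (chordCycArc n c a b d 1) B)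
    (i : ℕ) (hi : i < n) (h1 : c i = 0) (h2 : c ((i + 1) % n) = 1) :
    (⟨(i + 1) % n, Nat.mod_lt _ (by omega)⟩ : Fin n) ∈ B := by
  set y : Fin n := ⟨(i + 1) % n, Nat.mod_lt _ (by omega)⟩ with hy_def
  by_contra hy
  obtain ⟨-, -, habs, hdom⟩ := hB
  by_cases hcase : y = b ∧ d = 1
  · -- y is a 1-sink: no outgoing color-1 arc
    obtain ⟨b', -, hpath⟩ := habs _ hy
    obtain ⟨w, hw⟩ := first_arc hpath
    rcases hw with ⟨-, hc⟩ | ⟨-, -, hd⟩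
    · have : (y : ℕ) = (i + 1) % n := rfl
      rw [this, h2] at hc
      exact absurd hc (by decide)
    · rw [hcase.2] at hd
      exact absurd hd (by decide)
  · -- y is a 2-source: no incoming color-2 arc
    obtain ⟨b', -, hpath⟩ := hdom _ hy
    obtain ⟨w, hw⟩ := last_arc hpath
    rcases hw with ⟨heq, hcw⟩ | ⟨-, hyb, hd⟩
    · have hyv : (y : ℕ) = (i + 1) % n := rfl
      rw [hyv] at heq
      have hwi : (w : ℕ) = i := (succ_mod_inj_s18 hi w.isLt heq).symm
      rw [hwi, h1] at hcw
      exact absurd hcw (by decide)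
    · exact hcase ⟨hyb, hd⟩
end
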